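/- arXiv:1408.5718 — 6 statements merged into one kernel-verified Lean document; each statement's English description precedes it below -/
import Mathlib

section
/- Let ε > 0 and Q > 1. Suppose (X,d,μ) is a Q-doubling metric measure space, u : X → ℝ is integrable on all balls, g ∈ L^Q(X,μ) is nonnegative and Borel measurable, and the pair (u,g) satisfies the Q-Poincaré inequality. Then there exists a set E ⊂ X with H^h(E) = 0, where h(t) = (log(1/t))^{−Q−ε}, such that for every x ∈ X \ E the limit lim_{r→0} (1/μ(B(x,r))) ∫_{B(x,r)} u dμ exists. -/
open MeasureTheory Metric Set Filter Topology ENNReal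

noncomputable section

/-- Every (open) ball has positive and finite measure. -/
def BallsPosFinite {X : Type*} [MetricSpace X] [MeasurableSpace X]
    (μ : Measure X) : Prop :=
  ∀ (x : X) (r : ℝ), 0 < r → 0 < μ (ball x r) ∧ μ (ball x r) < ⊤

/-- `μ` is doubling with constant `Cμ`. -/
def DoublingWith {X : Type*} [MetricSpace X] [MeasurableSpace X]
    (μ : Measure X) (Cμ : ℝ≥0∞) : Prop :=
  ∀ (x : X) (r : ℝ), 0 < r → μ (ball x (2 * r)) ≤ Cμ * μ (ball x r)

/-- `μ` is a doubling measure. -/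
def Doubling {X : Type*} [MetricSpace X] [MeasurableSpace X]
    (μ : Measure X) : Prop :=
  ∃ Cμ : ℝ≥0∞, 1 ≤ Cμ ∧ Cμ < ⊤ ∧ DoublingWith μ Cμ

/-- Relative lower volume decay with exponent `Q` and constant `C`:
`(s/r)^Q ≤ C · μ(B(x,s))/μ(B(a,r))` whenever `x ∈ B(a,r)` and `0 < s ≤ r`. -/
def LowerVolume {X : Type*} [MetricSpace X] [MeasurableSpace X]
    (μ : Measure X) (Q C : ℝ) : Prop :=
  ∀ (a x : X) (r s : ℝ), x ∈ ball a r → 0 < s → s ≤ r →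
    ENNReal.ofReal ((s / r) ^ Q) ≤ ENNReal.ofReal C * (μ (ball x s) / μ (ball a r))

/-- `(X,d,μ)` is `Q`-doubling: `μ` is doubling and the relative lower volume
decay `(s/r)^Q ≤ C μ(B(x,s))/μ(B(a,r))` holds for some constant `C ≥ 1`. -/
def QDoubling {X : Type*} [MetricSpace X] [MeasurableSpace X]
    (μ : Measure X) (Q : ℝ) : Prop :=
  Doubling μ ∧ ∃ C : ℝ, 1 ≤ C ∧ LowerVolume μ Q C

/-- The pair `(u,g)` satisfies the `p`-Poincaré inequality with constants `C` and `lam`: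
for every ball `B`, `⨍_B |u - u_B| dμ ≤ C diam(B) (⨍_{lam B} g^p dμ)^{1/p}`. -/
def PoincarePair {X : Type*} [MetricSpace X] [MeasurableSpace X]
    (μ : Measure X) (u g : X → ℝ) (p C lam : ℝ) : Prop :=
  ∀ (x : X) (r : ℝ), 0 < r →
    ⨍ y in ball x r, |u y - ⨍ z in ball x r, u z ∂μ| ∂μ ≤
      C * diam (ball x r) * (⨍ y in ball x (lam * r), g y ^ p ∂μ) ^ (1 / p)

/-- A chain of balls `B_i = B(c i, s i)` associated with the point `x` and
radius `r`, with parameters `lam, M, m`. -/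
def IsBallChain {X : Type*} [MetricSpace X] (lam M m : ℝ) (x : X) (r : ℝ)
    (c : ℕ → X) (s : ℕ → ℝ) : Prop :=
  (∀ i, 0 < s i) ∧
  -- (1) `B_0 ⊆ X \ B(x,r)`
  ball (c 0) (s 0) ⊆ (ball x r)ᶜ ∧
  -- (2) `M⁻¹ diam(B_i) ≤ dist(x,B_i) ≤ M diam(B_i)`
  (∀ i, M⁻¹ * diam (ball (c i) (s i)) ≤ infDist x (ball (c i) (s i)) ∧
      infDist x (ball (c i) (s i)) ≤ M * diam (ball (c i) (s i))) ∧
  -- (3) `dist(x,B_i) ≤ M r 2^{-m i}`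
  (∀ i : ℕ, infDist x (ball (c i) (s i)) ≤ M * r * (2 : ℝ) ^ (-(m * i))) ∧
  -- (4) there is a ball `D_i ⊆ B_i ∩ B_{i+1}` with `B_i ∪ B_{i+1} ⊆ M D_i`
  (∀ i : ℕ, ∃ (y : X) (t : ℝ), 0 < t ∧
      ball y t ⊆ ball (c i) (s i) ∩ ball (c (i + 1)) (s (i + 1)) ∧
      ball (c i) (s i) ∪ ball (c (i + 1)) (s (i + 1)) ⊆ ball y (M * t)) ∧
  -- (5) no point of `X` belongs to more than `M` balls `lam B_i`
  (∀ y : X, {i : ℕ | y ∈ ball (c i) (lam * s i)}.Finite ∧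
      ({i : ℕ | y ∈ ball (c i) (lam * s i)}.ncard : ℝ) ≤ M)

/-- `X` satisfies the chain condition: for every `lam ≥ 1` there are constants
`M ≥ 1`, `0 < m ≤ 1` such that for each `x ∈ X` and all `0 < r < diam(X)/8`
there is a chain of balls associated with `x, r`. -/
def ChainCondition (X : Type*) [MetricSpace X] : Prop :=
  ∀ lam : ℝ, 1 ≤ lam → ∃ M m : ℝ, 1 ≤ M ∧ 0 < m ∧ m ≤ 1 ∧
    ∀ (x : X) (r : ℝ), 0 < r →
      ENNReal.ofReal r < EMetric.diam (Set.univ : Set X) / 8 →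
      ∃ (c : ℕ → X) (s : ℕ → ℝ), IsBallChain lam M m x r c s

/-- The gauge function `h(t) = (log(1/t))^p` (as a function on `ℝ≥0∞`). -/
def hGauge (p : ℝ) : ℝ≥0∞ → ℝ≥0∞ :=
  fun t => ENNReal.ofReal (Real.log (1 / t.toReal) ^ p)

/-- The generalized Hausdorff measure with gauge function `h(t) = (log(1/t))^p`. -/
def hausdorffH {X : Type*} [MetricSpace X] [MeasurableSpace X] [BorelSpace X]
    (p : ℝ) : Measure X :=
  Measure.mkMetric (hGauge p)

/-!
Let `ν = g^Q μ`, a finite measure, and call `x` bad at scale `i` when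
`ν(B(x, λ 2^{-i})) ≥ (i+1)^{-(Q+ε/2)}`. At a point that is bad at only finitely many scales,
the Poincaré inequality, doubling and the lower volume bound give
`|u_{B(x,r)} - u_{B(x,2^{-i})}| ≲ ν(B(x, λ 2^{-i}))^{1/Q} ≤ (i+1)^{-1-ε/(2Q)}` for
`2^{-i-1} ≤ r ≤ 2^{-i}`; this is summable, so the averages converge. The points that are bad at
infinitely many scales are covered, for every `N`, by the Vitali enlargements `B(x, 4λ 2^{-i})`
(`i ≥ N`) of disjoint balls carrying `ν`-mass at least `(i+1)^{-(Q+ε/2)}`, while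
`h(8λ 2^{-i}) ≈ (i+1)^{-Q-ε}`; hence their `h`-sum is `≲ (N+1)^{-ε/2} ν(X) → 0`.
-/

section Hausdorff

variable {X : Type*} [MetricSpace X]

lemma ediam_closedBall_le_ofReal (x : X) {r : ℝ} (hr : 0 ≤ r) :
    ediam (closedBall x r) ≤ ENNReal.ofReal (2 * r) :=
  ediam_le_of_forall_dist_le fun _ hy _ hz =>
    (dist_le_diam_of_mem isBounded_closedBall hy hz).trans (diam_closedBall hr)

lemma mkMetric_limsup_setOf_le_measure_ball_eq_zero [MeasurableSpace X] [BorelSpace X]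
    (ν : Measure X) [IsFiniteMeasure ν]
    {m : ℝ≥0∞ → ℝ≥0∞} {ρ : ℕ → ℝ} {τ c : ℕ → ℝ≥0∞} (hρ : ∀ i, 0 < ρ i) (hρ_anti : Antitone ρ)
    (hρ_lim : Tendsto ρ atTop (𝓝 0)) (hτ : ∀ i, τ i ≠ 0) (hc : Tendsto c atTop (𝓝 0))
    -- `8 * ρ i` bounds the diameter of the enlarged Vitali balls `closedBall x (4 * ρ i)`.
    (hm : ∀ᶠ N in atTop, ∀ i, N ≤ i → ∀ t ≤ ENNReal.ofReal (8 * ρ i), m t ≤ c N * τ i) :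
    Measure.mkMetric m (limsup (fun i => {x | τ i ≤ ν (ball x (ρ i))}) atTop) = 0 := by
  set S : ℕ → Set X := fun i => {x | τ i ≤ ν (ball x (ρ i))}
  have hvit : ∀ N : ℕ, ∃ w ⊆ {p : X × ℕ | N ≤ p.2 ∧ p.1 ∈ S p.2},
      (w.PairwiseDisjoint fun p => closedBall p.1 (ρ p.2)) ∧
      ∀ p ∈ {p : X × ℕ | N ≤ p.2 ∧ p.1 ∈ S p.2}, ∃ q ∈ w,
        closedBall p.1 (ρ p.2) ⊆ closedBall q.1 (4 * ρ q.2) := fun N =>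
    Vitali.exists_disjoint_subfamily_covering_enlargement_closedBall _ Prod.fst (ρ ∘ Prod.snd)
      (ρ N) (fun p hp => hρ_anti hp.1) 4 (by norm_num)
  choose w hwS hw_disj hw_cover using hvit
  have hw_disj' : ∀ N, Pairwise (Function.onFun Disjoint fun q : w N => ball q.1.1 (ρ q.1.2)) :=
    fun N q q' hqq' => (hw_disj N q.2 q'.2 (Subtype.coe_injective.ne hqq')).mono
      ball_subset_closedBall ball_subset_closedBall
  have hw_pos : ∀ N (q : w N), 0 < ν (ball q.1.1 (ρ q.1.2)) := fun N q =>
    (pos_iff_ne_zero.2 (hτ _)).trans_le (hwS N q.2).2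
  have : ∀ N, Countable (w N) := fun N => by
    have := Measure.countable_meas_pos_of_disjoint_iUnion (μ := ν)
      (fun q => measurableSet_ball) (hw_disj' N)
    exact Set.countable_univ_iff.mp (by simpa [hw_pos] using this)
  have hsum : ∀ᶠ N in atTop,
      ∑' q : w N, m (ediam (closedBall q.1.1 (4 * ρ q.1.2))) ≤ c N * ν univ := by
    filter_upwards [hm] with N hN
    calc ∑' q : w N, m (ediam (closedBall q.1.1 (4 * ρ q.1.2)))
        ≤ ∑' q : w N, c N * ν (ball q.1.1 (ρ q.1.2)) := by
          refine ENNReal.tsum_le_tsum fun q => (hN _ (hwS N q.2).1 _ ?_).trans ?_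
          · exact (ediam_closedBall_le_ofReal _ (by positivity [hρ q.1.2])).trans
              (ENNReal.ofReal_le_ofReal (by linarith))
          · exact mul_le_mul_right (hwS N q.2).2 _
      _ = c N * ∑' q : w N, ν (ball q.1.1 (ρ q.1.2)) := ENNReal.tsum_mul_left
      _ ≤ c N * ν univ := by
          gcongr
          exact (tsum_meas_le_meas_iUnion_of_disjoint ν (fun q => measurableSet_ball)
            (hw_disj' N)).trans (measure_mono (subset_univ _))
  have hcover : ∀ N, limsup S atTop ⊆ ⋃ q : w N, closedBall q.1.1 (4 * ρ q.1.2) := by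
    intro N x hx
    obtain ⟨i, hiN, hxi⟩ := (frequently_atTop.1 (mem_limsup_iff_frequently_mem.1 hx)) N
    obtain ⟨q, hq, hxq⟩ := hw_cover N (x, i) ⟨hiN, hxi⟩
    exact mem_iUnion.2 ⟨⟨q, hq⟩, hxq (mem_closedBall_self (hρ i).le)⟩
  have hdiam : ∀ N (q : w N),
      ediam (closedBall q.1.1 (4 * ρ q.1.2)) ≤ ENNReal.ofReal (8 * ρ N) := fun N q =>
    (ediam_closedBall_le_ofReal _ (by positivity [hρ q.1.2])).trans
      (ENNReal.ofReal_le_ofReal (by linarith [hρ_anti (hwS N q.2).1]))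
  have hc_lim : Tendsto (fun N => c N * ν univ) atTop (𝓝 0) := by
    simpa using ENNReal.Tendsto.mul_const hc (Or.inr (measure_ne_top ν univ))
  have hdiam_lim : Tendsto (fun N => ENNReal.ofReal (8 * ρ N)) atTop (𝓝 0) := by
    simpa using ENNReal.tendsto_ofReal (hρ_lim.const_mul 8)
  refine le_antisymm ?_ zero_le
  calc Measure.mkMetric m (limsup S atTop)
      ≤ liminf (fun N => ∑' q : w N, m (ediam (closedBall q.1.1 (4 * ρ q.1.2)))) atTop :=
        Measure.mkMetric_le_liminf_tsum _ _ hdiam_lim _ (Eventually.of_forall hdiam)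
          (Eventually.of_forall hcover) m
    _ ≤ liminf (fun N => c N * ν univ) atTop := liminf_le_liminf hsum
    _ = 0 := hc_lim.liminf_eq

lemma hGauge_mono {p : ℝ} (hp : p < 0) {a b : ℝ≥0∞} (hab : a ≤ b) (hb : b < 1) :
    hGauge p a ≤ hGauge p b := by
  rcases eq_or_ne a 0 with rfl | ha
  · simp [hGauge, Real.zero_rpow hp.ne]
  have ha' : 0 < a.toReal := toReal_pos ha (hab.trans_lt (hb.trans one_lt_top)).ne
  have hab' : a.toReal ≤ b.toReal := toReal_mono (hb.trans one_lt_top).ne hab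
  have hb' : b.toReal < 1 := toReal_lt_of_lt_ofReal (by simpa using hb)
  have hlog_pos : 0 < Real.log (1 / b.toReal) :=
    Real.log_pos ((one_lt_div (ha'.trans_le hab')).2 hb')
  exact ENNReal.ofReal_le_ofReal (Real.rpow_le_rpow_of_nonpos hlog_pos
    (Real.log_le_log (one_div_pos.2 (ha'.trans_le hab')) (one_div_le_one_div_of_le ha' hab')) hp.le)

lemma eventually_hGauge_le {p a : ℝ} (hp : p < 0) (ha : 0 < a) :
    ∀ᶠ i : ℕ in atTop, ∀ t ≤ ENNReal.ofReal (a * 2⁻¹ ^ i),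
      hGauge p t ≤ ENNReal.ofReal (2 ^ (-p) * ((i : ℝ) + 1) ^ p) := by
  have hlog : ∀ i : ℕ, Real.log (1 / (a * 2⁻¹ ^ i)) = i * Real.log 2 - Real.log a := by
    intro i
    rw [one_div, Real.log_inv, Real.log_mul ha.ne' (by positivity), Real.log_pow, Real.log_inv]
    ring
  have hsmall : ∀ᶠ i : ℕ in atTop, a * 2⁻¹ ^ i < 1 :=
    ((_root_.tendsto_pow_atTop_nhds_zero_of_lt_one (by norm_num) (by norm_num)).const_mul
      a).eventually (gt_mem_nhds (by simp))
  have hlarge : ∀ᶠ i : ℕ in atTop, ((i : ℝ) + 1) / 2 ≤ Real.log (1 / (a * 2⁻¹ ^ i)) := by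
    have hlog2 : 1 / 2 < Real.log 2 := by linarith [Real.log_two_gt_d9]
    filter_upwards [(tendsto_natCast_atTop_atTop.atTop_mul_const
      (sub_pos.2 hlog2)).eventually_ge_atTop (Real.log a + 1 / 2)] with i hi
    rw [hlog]
    linarith
  filter_upwards [hsmall, hlarge] with i hi_small hi_large t ht
  calc hGauge p t ≤ hGauge p (ENNReal.ofReal (a * 2⁻¹ ^ i)) :=
        hGauge_mono hp ht (by simpa using hi_small)
    _ ≤ ENNReal.ofReal ((((i : ℝ) + 1) / 2) ^ p) := by
        rw [hGauge, toReal_ofReal (by positivity)]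
        exact ENNReal.ofReal_le_ofReal (Real.rpow_le_rpow_of_nonpos (by positivity) hi_large hp.le)
    _ = ENNReal.ofReal (2 ^ (-p) * ((i : ℝ) + 1) ^ p) := by
        rw [Real.div_rpow (by positivity) zero_le_two, Real.rpow_neg zero_le_two, div_eq_inv_mul]

lemma hausdorffH_limsup_setOf_le_measure_ball_eq_zero [MeasurableSpace X] [BorelSpace X]
    (ν : Measure X) [IsFiniteMeasure ν] {p q lam : ℝ} (hp : 0 < p) (hqp : q < p)
    (hlam : 0 < lam) :
    hausdorffH (-p) (limsup (fun i : ℕ =>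
      {x | ENNReal.ofReal (((i : ℝ) + 1) ^ (-q)) ≤ ν (ball x (lam * 2⁻¹ ^ i))}) atTop) = 0 := by
  have hgeom : Tendsto (fun i : ℕ => (2⁻¹ : ℝ) ^ i) atTop (𝓝 0) :=
    _root_.tendsto_pow_atTop_nhds_zero_of_lt_one (by norm_num) (by norm_num)
  have hdecay : Tendsto (fun N : ℕ => ((N : ℝ) + 1) ^ (-(p - q))) atTop (𝓝 0) :=
    (tendsto_rpow_neg_atTop (sub_pos.2 hqp)).comp
      (tendsto_atTop_add_const_right _ 1 tendsto_natCast_atTop_atTop)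
  refine mkMetric_limsup_setOf_le_measure_ball_eq_zero ν
    (c := fun N => ENNReal.ofReal (2 ^ p * ((N : ℝ) + 1) ^ (-(p - q))))
    (fun i => by positivity)
    (fun i j hij => mul_le_mul_of_nonneg_left (pow_le_pow_of_le_one (by norm_num) (by norm_num) hij)
      hlam.le)
    (by simpa using hgeom.const_mul lam) (fun i => (ofReal_pos.2 (by positivity)).ne')
    (by simpa using ENNReal.tendsto_ofReal (hdecay.const_mul (2 ^ p))) ?_
  filter_upwards [eventually_forall_ge_atTop.2
    (eventually_hGauge_le (neg_neg_of_pos hp) (by positivity : (0 : ℝ) < 8 * lam))]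
    with N hN i hi t ht
  have hsplit : ((i : ℝ) + 1) ^ (-p) ≤ ((N : ℝ) + 1) ^ (-(p - q)) * ((i : ℝ) + 1) ^ (-q) := by
    rw [show -p = -(p - q) + -q by ring, Real.rpow_add (by positivity)]
    exact mul_le_mul_of_nonneg_right
      (Real.rpow_le_rpow_of_nonpos (by positivity) (by simpa using hi) (by linarith))
      (by positivity)
  calc hGauge (-p) t ≤ ENNReal.ofReal (2 ^ p * ((i : ℝ) + 1) ^ (-p)) := by
        simpa using hN i hi t (by rwa [mul_assoc])
    _ ≤ _ := by
        rw [← ofReal_mul (by positivity), mul_assoc]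
        gcongr

end Hausdorff

lemma exists_mem_Ioc_two_inv_pow {r : ℝ} (hr0 : 0 < r) (hr1 : r ≤ 1) :
    ∃ n : ℕ, 2⁻¹ ^ (n + 1) < r ∧ r ≤ 2⁻¹ ^ n := by
  obtain ⟨n, hn, hn'⟩ := exists_nat_pow_near (one_le_inv₀ hr0 |>.2 hr1) one_lt_two
  refine ⟨n, ?_, ?_⟩
  · rwa [inv_pow, inv_lt_comm₀ (by positivity) hr0]
  · rwa [inv_pow, le_inv_comm₀ hr0 (by positivity)]

lemma exists_tendsto_nhdsGT_zero_of_summable_dyadic {f : ℝ → ℝ} {b : ℕ → ℝ} (hb : Summable b)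
    (hf : ∀ᶠ i in atTop, ∀ r ∈ Icc (2⁻¹ ^ (i + 1)) (2⁻¹ ^ i), |f r - f (2⁻¹ ^ i)| ≤ b i) :
    ∃ L, Tendsto f (𝓝[>] 0) (𝓝 L) := by
  obtain ⟨N, hN⟩ := eventually_atTop.1 hf
  set v : ℕ → ℝ := fun i => f (2⁻¹ ^ i)
  have hstep : ∀ n, dist (v (n + N)) (v (n + 1 + N)) ≤ b (n + N) := by
    intro n
    rw [dist_comm, Real.dist_eq, show n + 1 + N = n + N + 1 by omega]
    exact hN _ (by omega) _ ⟨le_rfl, pow_le_pow_of_le_one (by norm_num) (by norm_num) (by omega)⟩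
  obtain ⟨L, hL⟩ := cauchySeq_tendsto_of_complete
    (cauchySeq_of_dist_le_of_summable _ hstep ((summable_nat_add_iff N).2 hb))
  have hv : Tendsto v atTop (𝓝 L) := (tendsto_add_atTop_iff_nat N).1 hL
  refine ⟨L, Metric.tendsto_nhdsWithin_nhds.2 fun η hη => ?_⟩
  obtain ⟨I, hI⟩ := eventually_atTop.1 <| (eventually_ge_atTop N).and <|
    (hb.tendsto_atTop_zero.eventually (gt_mem_nhds (half_pos hη))).and
    (hv.eventually (ball_mem_nhds L (half_pos hη)))
  refine ⟨2⁻¹ ^ I, by positivity, fun r hr hrI => ?_⟩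
  rw [Real.dist_eq, sub_zero, abs_of_pos hr] at hrI
  obtain ⟨n, hn, hn'⟩ := exists_mem_Ioc_two_inv_pow hr
    (hrI.le.trans (pow_le_one₀ (by norm_num) (by norm_num)))
  have hIn : I ≤ n := by
    have := hn.trans hrI
    rw [pow_lt_pow_iff_right_of_lt_one₀ (by norm_num) (by norm_num)] at this
    omega
  obtain ⟨hNn, hbn, hvn⟩ := hI n hIn
  have hfn : |f r - v n| ≤ b n := hN n hNn r ⟨hn.le, hn'⟩
  calc dist (f r) L ≤ |f r - v n| + dist (v n) L := by
        rw [← Real.dist_eq]; exact dist_triangle _ _ _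
    _ < η := by linarith

lemma summable_nat_add_one_rpow {s : ℝ} (hs : s < -1) :
    Summable fun n : ℕ => ((n : ℝ) + 1) ^ s := by
  simpa using (summable_nat_add_iff 1).2 (Real.summable_nat_rpow.2 hs)

lemma abs_setAverage_sub_setAverage_le {X : Type*} [MeasurableSpace X] {μ : Measure X}
    {u : X → ℝ} {s t : Set X} (hst : s ⊆ t) (hs : μ s ≠ 0) (ht : μ t ≠ ∞)
    (hu : IntegrableOn u t μ) :
    |⨍ y in s, u y ∂μ - ⨍ y in t, u y ∂μ| ≤
      μ.real t / μ.real s * ⨍ y in t, |u y - ⨍ z in t, u z ∂μ| ∂μ := by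
  set c := ⨍ z in t, u z ∂μ
  have hs_fin : μ s ≠ ∞ := ne_top_of_le_ne_top ht (measure_mono hst)
  have hs_pos : 0 < μ.real s := ENNReal.toReal_pos hs hs_fin
  have hosc : IntegrableOn (fun y => |u y - c|) t μ :=
    (hu.sub (integrableOn_const ht)).abs
  have key : μ.real s * |⨍ y in s, u y ∂μ - c| ≤ μ.real t * ⨍ y in t, |u y - c| ∂μ :=
    calc μ.real s * |⨍ y in s, u y ∂μ - c| = |∫ y in s, (u y - c) ∂μ| := by
          rw [integral_sub (hu.mono_set hst) (integrableOn_const hs_fin), setIntegral_const,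
            ← measure_smul_setAverage u hs_fin, smul_eq_mul, smul_eq_mul, ← mul_sub, abs_mul,
            abs_of_pos hs_pos]
      _ ≤ ∫ y in s, |u y - c| ∂μ := abs_integral_le_integral_abs
      _ ≤ ∫ y in t, |u y - c| ∂μ :=
          setIntegral_mono_set hosc (Eventually.of_forall fun _ => abs_nonneg _)
            (Eventually.of_forall hst)
      _ = μ.real t * ⨍ y in t, |u y - c| ∂μ := (measure_smul_setAverage _ ht).symm
  rwa [div_mul_eq_mul_div, le_div_iff₀ hs_pos, mul_comm]

section Poincare

variable {X : Type*} [MetricSpace X] [MeasurableSpace X] {μ : Measure X}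

lemma LowerVolume.rpow_mul_measureReal_ball_le {Q CV : ℝ} (hLV : LowerVolume μ Q CV)
    (hCV : 0 ≤ CV) (x : X) {R t : ℝ} (hR : 0 < R) (ht : 0 < t) (ht1 : t ≤ 1)
    (hμR : μ (ball x R) ≠ ∞) :
    t ^ Q * μ.real (ball x R) ≤ CV * μ.real (ball x (R * t)) := by
  have hRt : R * t ≤ R := mul_le_of_le_one_right hR.le ht1
  have h := hLV x x R (R * t) (mem_ball_self hR) (by positivity) hRt
  rw [mul_div_cancel_left₀ _ hR.ne'] at h
  have h' : ENNReal.ofReal (t ^ Q) * μ (ball x R) ≤ ENNReal.ofReal CV * μ (ball x (R * t)) := by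
    rcases eq_or_ne (μ (ball x R)) 0 with h0 | h0
    · simp [h0]
    calc ENNReal.ofReal (t ^ Q) * μ (ball x R)
        ≤ ENNReal.ofReal CV * (μ (ball x (R * t)) / μ (ball x R)) * μ (ball x R) := by gcongr
      _ = ENNReal.ofReal CV * μ (ball x (R * t)) := by
          rw [mul_assoc, ENNReal.div_mul_cancel h0 hμR]
  have hfin : μ (ball x (R * t)) ≠ ∞ :=
    ne_top_of_le_ne_top hμR (measure_mono (ball_subset_ball hRt))
  simpa [measureReal_def, toReal_mul, toReal_ofReal (Real.rpow_nonneg ht.le Q),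
    toReal_ofReal hCV] using toReal_mono (mul_ne_top ofReal_ne_top hfin) h'

lemma DoublingWith.measureReal_ball_div_le {Cμ : ℝ≥0∞} (hD : DoublingWith μ Cμ) (hCμ : Cμ ≠ ∞)
    (hballs : BallsPosFinite μ) (x : X) {r r' : ℝ} (hr' : 0 < r') (hrr' : r ≤ 2 * r') :
    μ.real (ball x r) / μ.real (ball x r') ≤ Cμ.toReal := by
  obtain ⟨hpos, hfin⟩ := hballs x r' hr'
  have h : μ (ball x r) ≤ Cμ * μ (ball x r') :=
    (measure_mono (ball_subset_ball hrr')).trans (hD x r' hr')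
  rw [measureReal_def, measureReal_def, div_le_iff₀ (toReal_pos hpos.ne' hfin.ne), ← toReal_mul]
  exact toReal_mono (mul_ne_top hCμ hfin.ne) h

theorem PoincarePair.abs_setAverage_ball_sub_le {u g : X → ℝ} {Q C lam CV : ℝ} {Cμ : ℝ≥0∞}
    (hPI : PoincarePair μ u g Q C lam) (hballs : BallsPosFinite μ) (hD : DoublingWith μ Cμ)
    (hCμ : Cμ ≠ ∞) (hLV : LowerVolume μ Q CV) (hCV : 0 ≤ CV) (hQ : 0 < Q) (hC : 0 ≤ C)
    (hlam : 0 < lam) (hg : ∀ y, 0 ≤ g y) {x : X} {r r' : ℝ} (hr' : 0 < r') (hr'r : r' ≤ r)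
    (hrr' : r ≤ 2 * r') (hr1 : r ≤ 1) (hu : IntegrableOn u (ball x r) μ) :
    |⨍ y in ball x r', u y ∂μ - ⨍ y in ball x r, u y ∂μ| ≤
      2 * Cμ.toReal * C *
        (CV / μ.real (ball x lam) * ∫ y in ball x (lam * r), g y ^ Q ∂μ) ^ (1 / Q) := by
  have hr : 0 < r := hr'.trans_le hr'r
  set A := ⨍ y in ball x (lam * r), g y ^ Q ∂μ
  set I := ∫ y in ball x (lam * r), g y ^ Q ∂μ
  have hI : 0 ≤ I := integral_nonneg fun y => Real.rpow_nonneg (hg y) Q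
  have hA : A = (μ.real (ball x (lam * r)))⁻¹ * I := setAverage_eq μ _ _
  have hA0 : 0 ≤ A := by rw [hA]; positivity
  obtain ⟨hlam_pos, hlam_fin⟩ := hballs x lam hlam
  obtain ⟨hlr_pos, hlr_fin⟩ := hballs x (lam * r) (by positivity)
  have hscale : r ^ Q * A ≤ CV / μ.real (ball x lam) * I := by
    rw [hA, ← mul_assoc]
    refine mul_le_mul_of_nonneg_right ?_ hI
    have hlr : 0 < μ.real (ball x (lam * r)) := toReal_pos hlr_pos.ne' hlr_fin.ne
    have hl : 0 < μ.real (ball x lam) := toReal_pos hlam_pos.ne' hlam_fin.ne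
    rw [← div_eq_mul_inv, div_le_div_iff₀ hlr hl]
    exact hLV.rpow_mul_measureReal_ball_le hCV x hlam hr hr1 hlam_fin.ne
  have hroot : r * A ^ (1 / Q) ≤ (CV / μ.real (ball x lam) * I) ^ (1 / Q) := by
    calc r * A ^ (1 / Q) = (r ^ Q * A) ^ (1 / Q) := by
          rw [Real.mul_rpow (by positivity) hA0, ← Real.rpow_mul hr.le, mul_one_div_cancel hQ.ne',
            Real.rpow_one]
      _ ≤ _ := Real.rpow_le_rpow (by positivity) hscale (by positivity)
  have hosc : ⨍ y in ball x r, |u y - ⨍ z in ball x r, u z ∂μ| ∂μ ≤ C * (2 * r) * A ^ (1 / Q) :=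
    (hPI x r hr).trans (by gcongr; exact diam_ball hr.le)
  have hratio := hD.measureReal_ball_div_le hCμ hballs x hr' hrr'
  calc |⨍ y in ball x r', u y ∂μ - ⨍ y in ball x r, u y ∂μ|
      ≤ μ.real (ball x r) / μ.real (ball x r') *
          ⨍ y in ball x r, |u y - ⨍ z in ball x r, u z ∂μ| ∂μ :=
        abs_setAverage_sub_setAverage_le (ball_subset_ball hr'r) (hballs x r' hr').1.ne'
          (hballs x r hr).2.ne hu
    _ ≤ Cμ.toReal * (C * (2 * r) * A ^ (1 / Q)) := by
        gcongr
        rw [setAverage_eq]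
        exact smul_nonneg (by positivity) (integral_nonneg fun _ => abs_nonneg _)
    _ = 2 * Cμ.toReal * C * (r * A ^ (1 / Q)) := by ring
    _ ≤ _ := by gcongr

theorem PoincarePair.exists_tendsto_setAverage_ball {u g : X → ℝ} {Q C lam CV : ℝ} {Cμ : ℝ≥0∞}
    (hPI : PoincarePair μ u g Q C lam) (hballs : BallsPosFinite μ) (hD : DoublingWith μ Cμ)
    (hCμ : Cμ ≠ ∞) (hLV : LowerVolume μ Q CV) (hCV : 0 ≤ CV) (hQ : 0 < Q) (hC : 0 ≤ C)
    (hlam : 0 < lam) (hg : ∀ y, 0 ≤ g y) {x : X}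
    (hu : ∀ r, 0 < r → IntegrableOn u (ball x r) μ) {σ : ℝ} (hσ : Q < σ)
    (henergy : ∀ᶠ i : ℕ in atTop,
      ∫ y in ball x (lam * 2⁻¹ ^ i), g y ^ Q ∂μ ≤ ((i : ℝ) + 1) ^ (-σ)) :
    ∃ L, Tendsto (fun r => ⨍ y in ball x r, u y ∂μ) (𝓝[>] 0) (𝓝 L) := by
  set K := 2 * Cμ.toReal * C * (CV / μ.real (ball x lam)) ^ (1 / Q)
  have hsum : Summable fun i : ℕ => K * (((i : ℝ) + 1) ^ (-σ)) ^ (1 / Q) := by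
    refine (summable_nat_add_one_rpow (s := -σ * (1 / Q)) ?_).mul_left K |>.congr
      fun i => by rw [← Real.rpow_mul (by positivity)]
    rwa [neg_mul, neg_lt_neg_iff, mul_one_div, one_lt_div hQ]
  refine exists_tendsto_nhdsGT_zero_of_summable_dyadic hsum ?_
  filter_upwards [henergy] with i hi r ⟨hr_lo, hr_hi⟩
  have hr : 0 < r := lt_of_lt_of_le (by positivity) hr_lo
  calc |⨍ y in ball x r, u y ∂μ - ⨍ y in ball x (2⁻¹ ^ i), u y ∂μ|
      ≤ 2 * Cμ.toReal * C * (CV / μ.real (ball x lam) *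
          ∫ y in ball x (lam * 2⁻¹ ^ i), g y ^ Q ∂μ) ^ (1 / Q) :=
        hPI.abs_setAverage_ball_sub_le hballs hD hCμ hLV hCV hQ hC hlam hg hr hr_hi
          (by rw [pow_succ] at hr_lo; linarith) (pow_le_one₀ (by norm_num) (by norm_num))
          (hu _ (by positivity))
    _ ≤ _ := by
        have hI : 0 ≤ ∫ y in ball x (lam * 2⁻¹ ^ i), g y ^ Q ∂μ :=
          integral_nonneg fun y => Real.rpow_nonneg (hg y) Q
        rw [Real.mul_rpow (by positivity) hI, ← mul_assoc]
        gcongr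

end Poincare

theorem lebesgue_points_without_chain_general
    (ε Q : ℝ) (hε : 0 < ε) (hQ : 1 < Q)
    {X : Type*} [MetricSpace X] [MeasurableSpace X] [BorelSpace X]
    (μ : Measure X) (hballs : BallsPosFinite μ)
    (hQdoub : QDoubling μ Q)
    (u g : X → ℝ)
    (hu : ∀ (x : X) (r : ℝ), 0 < r → IntegrableOn u (ball x r) μ)
    (hg0 : ∀ x, 0 ≤ g x)
    (hgLQ : MemLp g (ENNReal.ofReal Q) μ)
    (C lam : ℝ) (hC : 0 < C) (hlam : 1 ≤ lam)
    (hPI : PoincarePair μ u g Q C lam) :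
    ∃ E : Set X, hausdorffH (-Q - ε) E = 0 ∧
      ∀ x ∉ E, ∃ L : ℝ, Tendsto (fun r : ℝ => ⨍ y in ball x r, u y ∂μ)
        (𝓝[>] 0) (𝓝 L) := by
  obtain ⟨⟨Cμ, -, hCμ, hD⟩, CV, hCV, hLV⟩ := hQdoub
  have hQ0 : 0 < Q := one_pos.trans hQ
  have hgQ : Integrable (fun y => g y ^ Q) μ := by
    simpa [Real.norm_of_nonneg (hg0 _), toReal_ofReal hQ0.le] using
      hgLQ.integrable_norm_rpow (by simpa using hQ0) ofReal_ne_top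
  set ν := μ.withDensity fun y => ENNReal.ofReal (g y ^ Q)
  have : IsFiniteMeasure ν := isFiniteMeasure_withDensity_ofReal hgQ.2
  refine ⟨limsup (fun i : ℕ => {x | ENNReal.ofReal (((i : ℝ) + 1) ^ (-(Q + ε / 2))) ≤
    ν (ball x (lam * 2⁻¹ ^ i))}) atTop, ?_, fun x hx => ?_⟩
  · rw [show -Q - ε = -(Q + ε) by ring]
    exact hausdorffH_limsup_setOf_le_measure_ball_eq_zero ν (by positivity) (by linarith)
      (one_pos.trans_le hlam)
  refine hPI.exists_tendsto_setAverage_ball hballs hD hCμ.ne hLV (by linarith) hQ0 hC.le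
    (one_pos.trans_le hlam) hg0 (hu x) (σ := Q + ε / 2) (by linarith) ?_
  have hsmall : ∀ᶠ i : ℕ in atTop,
      ν (ball x (lam * 2⁻¹ ^ i)) < ENNReal.ofReal (((i : ℝ) + 1) ^ (-(Q + ε / 2))) := by
    simpa only [mem_limsup_iff_frequently_mem, mem_ofPred_eq, not_frequently, not_le] using hx
  filter_upwards [hsmall] with i hi
  have hνball := ofReal_integral_eq_lintegral_ofReal hgQ.integrableOn
    (ae_of_all (μ.restrict (ball x (lam * 2⁻¹ ^ i))) fun y => Real.rpow_nonneg (hg0 y) Q)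
  rw [← withDensity_apply _ measurableSet_ball] at hνball
  exact (ofReal_le_ofReal_iff (by positivity)).1 (hνball.trans_le hi.le)

/-- Let `ε > 0`, `Q > 1`. If `(X,d,μ)` is a `Q`-doubling metric measure space,
`u` is integrable on balls, `g ∈ L^Q` is nonnegative Borel measurable and `(u,g)`
satisfies the `Q`-Poincaré inequality, then there is a set `E` with `H^h(E) = 0`,
`h(t) = log^{-Q-ε}(1/t)`, such that the limit of integral averages of `u` exists
at every point outside `E`. -/
theorem lebesgue_points_without_chain
    (ε Q : ℝ) (hε : 0 < ε) (hQ : 1 < Q)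
    {X : Type*} [MetricSpace X] [MeasurableSpace X] [BorelSpace X]
    (μ : Measure X) (hballs : BallsPosFinite μ)
    (hQdoub : QDoubling μ Q)
    (u g : X → ℝ)
    (hu : ∀ (x : X) (r : ℝ), 0 < r → IntegrableOn u (ball x r) μ)
    (hg0 : ∀ x, 0 ≤ g x) (hgm : Measurable g)
    (hgLQ : MemLp g (ENNReal.ofReal Q) μ)
    (C lam : ℝ) (hC : 0 < C) (hlam : 1 ≤ lam)
    (hPI : PoincarePair μ u g Q C lam) :
    ∃ E : Set X, hausdorffH (-Q - ε) E = 0 ∧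
      ∀ x ∉ E, ∃ L : ℝ, Tendsto (fun r : ℝ => ⨍ y in ball x r, u y ∂μ)
        (𝓝[>] 0) (𝓝 L) :=
  lebesgue_points_without_chain_general ε Q hε hQ μ hballs hQdoub u g hu hg0 hgLQ C lam hC hlam hPI
end
end

section
/- Suppose (X,d,μ) is a doubling metric measure space such that (X,d) is connected and L-annularly connected for some L ≥ 1. Then (X,d) satisfies the chain condition. -/
open MeasureTheory Metric Set Filter Topology ENNReal

noncomputable section

/-- `X` is `L`-annularly connected: whenever `y, z` lie in the annulus
`A(x,r,2r) = closedBall(x,2r) \ ball(x,r)`, there is a curve joining `y` to `z`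
whose image lies in `A(x, r/L, 2rL)`. -/
def AnnularlyConnected (X : Type*) [MetricSpace X] (L : ℝ) : Prop :=
  ∀ (x : X) (r : ℝ), 0 < r →
    ∀ y ∈ closedBall x (2 * r) \ ball x r, ∀ z ∈ closedBall x (2 * r) \ ball x r,
      ∃ (γ : ℝ → X) (a b : ℝ), a ≤ b ∧ ContinuousOn γ (Set.Icc a b) ∧
        γ a = y ∧ γ b = z ∧
        γ '' Set.Icc a b ⊆ closedBall x (2 * r * L) \ ball x (r / L)


/-! Connectedness gives points `p k` with `d(x, p k) = 2r / 2^k`. Consecutive ones lie in the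
annulus `A(x, r / 2^k, 2r / 2^k)`, so annular connectivity joins them by a curve inside
`A(x, r / (2^k L), 2rL / 2^k)`. Along that curve take a shortest chain of points with steps at
most a fixed fraction `ε` of the scale `r / 2^k`: non-consecutive points of a shortest chain are
`ε`-apart, so the doubling measure bounds its length independently of `k` and `r`. Padding these
chains to a common length `B`, laying them end to end and centring at each point a ball of radius
comparable to its scale gives the chain of balls with `m = 1 / B`; a point at distance `d` from
`x` only meets enlarged balls whose scale is comparable to `d`, which bounds the overlap. -/

section MetricGeneralities

variable {X : Type*} [MetricSpace X]

theorem exists_dist_eq_of_le_dist [PreconnectedSpace X] {x z : X} {t : ℝ} (ht₀ : 0 ≤ t)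
    (ht : t ≤ dist x z) : ∃ p, dist x p = t := by
  obtain ⟨p, -, hp⟩ := isPreconnected_univ.intermediate_value (mem_univ x) (mem_univ z)
    (continuous_const.dist continuous_id).continuousOn ⟨(dist_self x).symm ▸ ht₀, ht⟩
  exact ⟨p, hp⟩

theorem le_diam_ball_of_le_dist [PreconnectedSpace X] {c y : X} {s : ℝ} (hs : 0 < s)
    (hy : s ≤ dist c y) : s ≤ diam (ball c s) := by
  refine le_of_forall_lt_imp_le_of_dense fun t ht => ?_
  rcases lt_or_ge t 0 with ht₀ | ht₀
  · exact ht₀.le.trans diam_nonneg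
  obtain ⟨p, hp⟩ := exists_dist_eq_of_le_dist ht₀ (ht.le.trans hy)
  have hpc : p ∈ ball c s := by rwa [mem_ball, dist_comm, hp]
  exact hp ▸ dist_le_diam_of_mem isBounded_ball (mem_ball_self hs) hpc

theorem inv_mul_diam_ball_le_infDist {x c : X} {s M : ℝ} (hs : 0 < s) (hM : 1 ≤ M)
    (hc : 3 * s ≤ dist x c) : M⁻¹ * diam (ball c s) ≤ infDist x (ball c s) := by
  have hdiam : M⁻¹ * diam (ball c s) ≤ 2 * s :=
    (mul_le_of_le_one_left diam_nonneg (inv_le_one_of_one_le₀ hM)).trans (diam_ball hs.le)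
  refine hdiam.trans ((le_infDist ⟨c, mem_ball_self hs⟩).2 fun y hy => ?_)
  linarith [dist_triangle x y c, mem_ball.1 hy]

theorem infDist_ball_le_mul_diam [PreconnectedSpace X] {x c : X} {s M : ℝ} (hs : 0 < s)
    (hM : 0 ≤ M) (hsc : s ≤ dist x c) (hc : dist x c ≤ M * s) :
    infDist x (ball c s) ≤ M * diam (ball c s) :=
  calc infDist x (ball c s) ≤ dist x c := infDist_le_dist_of_mem (mem_ball_self hs)
    _ ≤ M * s := hc
    _ ≤ M * diam (ball c s) :=
      mul_le_mul_of_nonneg_left (le_diam_ball_of_le_dist hs (dist_comm x c ▸ hsc)) hM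

theorem exists_ball_subset_inter_union_subset {a b : X} {s s' M : ℝ} (hs' : 0 < s')
    (hss' : s' ≤ s) (hs : s ≤ 2 * s') (hab : dist a b ≤ s' / 2) (hM : 5 ≤ M) :
    ∃ (y : X) (t : ℝ), 0 < t ∧ ball y t ⊆ ball a s ∩ ball b s' ∧
      ball a s ∪ ball b s' ⊆ ball y (M * t) := by
  refine ⟨b, s' / 2, by positivity, fun w hw => ⟨?_, ?_⟩, fun w hw => mem_ball.2 ?_⟩
  · exact mem_ball.2 (by linarith [dist_triangle w b a, dist_comm a b, mem_ball.1 hw])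
  · exact ball_subset_ball (by linarith) hw
  · have : 5 * (s' / 2) ≤ M * (s' / 2) := by gcongr
    rcases hw with hw | hw
    · linarith [dist_triangle w a b, mem_ball.1 hw]
    · linarith [mem_ball.1 hw]

theorem exists_le_dist_of_ofReal_lt_ediam (x : X) {t : ℝ}
    (h : ENNReal.ofReal (2 * t) < ediam (univ : Set X)) : ∃ z, t ≤ dist x z := by
  by_contra! hfar
  refine h.not_ge (ediam_le fun u _ v _ => ?_)
  rw [edist_dist]
  refine ENNReal.ofReal_le_ofReal ?_
  linarith [dist_triangle_left u v x, hfar u, hfar v]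

end MetricGeneralities

section Chains

variable {X : Type*} [MetricSpace X]

def proximityGraph (K : Set X) (ε : ℝ) : SimpleGraph X where
  Adj u v := u ≠ v ∧ u ∈ K ∧ v ∈ K ∧ dist u v ≤ ε
  symm := ⟨fun u v h => ⟨h.1.symm, h.2.2.1, h.2.1, dist_comm u v ▸ h.2.2.2⟩⟩

theorem proximityGraph_adj {K : Set X} {ε : ℝ} {u v : X} :
    (proximityGraph K ε).Adj u v ↔ u ≠ v ∧ u ∈ K ∧ v ∈ K ∧ dist u v ≤ ε :=
  Iff.rfl

theorem IsPreconnected.reachable_proximityGraph {K : Set X} (hK : IsPreconnected K) {ε : ℝ}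
    (hε : 0 < ε) {p p' : X} (hp : p ∈ K) (hp' : p' ∈ K) :
    (proximityGraph K ε).Reachable p p' := by
  refine hK.induction₂ (proximityGraph K ε).Reachable (fun u hu => ?_)
    (fun _ _ _ _ _ _ => SimpleGraph.Reachable.trans) (fun _ _ _ _ => SimpleGraph.Reachable.symm)
    hp hp'
  filter_upwards [self_mem_nhdsWithin, mem_nhdsWithin_of_mem_nhds (ball_mem_nhds u hε)]
    with v hv hvu
  by_cases huv : u = v
  · exact huv ▸ SimpleGraph.Reachable.refl u
  · exact SimpleGraph.Adj.reachable (proximityGraph_adj.2 ⟨huv, hu, hv, (mem_ball'.1 hvu).le⟩)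

theorem IsPreconnected.exists_separated_chain {K : Set X} (hK : IsPreconnected K) {ε : ℝ}
    (hε : 0 < ε) {p p' : X} (hp : p ∈ K) (hp' : p' ∈ K) :
    ∃ (n : ℕ) (q : ℕ → X), q 0 = p ∧ q n = p' ∧ (∀ j, q j ∈ K) ∧
      (∀ j < n, dist (q j) (q (j + 1)) ≤ ε) ∧
      ∀ a b, a + 2 ≤ b → b ≤ n → ε < dist (q a) (q b) := by
  obtain ⟨w, hw⟩ := (hK.reachable_proximityGraph hε hp hp').exists_walk_length_eq_dist
  have hwK : ∀ j, w.getVert j ∈ K := fun j => by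
    rcases lt_or_ge j w.length with hj | hj
    · exact (proximityGraph_adj.1 (w.adj_getVert_succ hj)).2.1
    · exact (w.getVert_of_length_le hj).symm ▸ hp'
  refine ⟨w.length, w.getVert, w.getVert_zero, w.getVert_length, hwK,
    fun j hj => (proximityGraph_adj.1 (w.adj_getVert_succ hj)).2.2.2, fun a b hab hb => ?_⟩
  by_contra! hclose
  -- a shortcut between the `a`-th and `b`-th vertices would beat the shortest walk `w`
  obtain ⟨bridge, hbridge⟩ : ∃ bridge : (proximityGraph K ε).Walk (w.getVert a) (w.getVert b),
      bridge.length ≤ 1 := by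
    by_cases heq : w.getVert a = w.getVert b
    · exact ⟨SimpleGraph.Walk.nil.copy rfl heq, by simp⟩
    · exact ⟨.cons (proximityGraph_adj.2 ⟨heq, hwK a, hwK b, hclose⟩) .nil, by simp⟩
  have := SimpleGraph.dist_le (((w.take a).append bridge).append (w.drop b))
  simp only [SimpleGraph.Walk.length_append, SimpleGraph.Walk.take_length,
    SimpleGraph.Walk.drop_length] at this
  omega

end Chains

section Doubling

variable {X : Type*} [MetricSpace X] [MeasurableSpace X] {μ : Measure X} {Cμ : ℝ≥0∞}

theorem DoublingWith.measure_ball_two_pow_mul_le (hd : DoublingWith μ Cμ) (z : X) {t : ℝ}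
    (ht : 0 < t) (κ : ℕ) : μ (ball z (2 ^ κ * t)) ≤ Cμ ^ κ * μ (ball z t) := by
  induction κ with
  | zero => simp
  | succ κ ih =>
    calc μ (ball z (2 ^ (κ + 1) * t)) = μ (ball z (2 * (2 ^ κ * t))) := by ring_nf
      _ ≤ Cμ * μ (ball z (2 ^ κ * t)) := hd z _ (by positivity)
      _ ≤ Cμ * (Cμ ^ κ * μ (ball z t)) := by gcongr
      _ = Cμ ^ (κ + 1) * μ (ball z t) := by rw [pow_succ', mul_assoc]

variable [BorelSpace X]

theorem DoublingWith.card_le_of_separated (hballs : BallsPosFinite μ) (hd : DoublingWith μ Cμ)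
    {ι : Type*} {t : Finset ι} {z : ι → X} {y : X} {R ρ : ℝ} {κ : ℕ} (hρ : 0 < ρ) (hR : 0 ≤ R)
    (hκ : 4 * R + 2 * ρ ≤ 2 ^ κ * ρ) (hz : ∀ i ∈ t, z i ∈ closedBall y R)
    (hsep : (t : Set ι).Pairwise fun i j => ρ ≤ dist (z i) (z j)) :
    (t.card : ℝ≥0∞) ≤ Cμ ^ κ := by
  obtain ⟨hpos, hfin⟩ := hballs y (R + ρ) (by linarith)
  have hzy : ∀ i ∈ t, dist (z i) y ≤ R := fun i hi => mem_closedBall.1 (hz i hi)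
  have hlarge : ∀ i ∈ t, μ (ball y (R + ρ)) ≤ Cμ ^ κ * μ (ball (z i) (ρ / 2)) := fun i hi =>
    calc μ (ball y (R + ρ)) ≤ μ (ball (z i) (2 ^ κ * (ρ / 2))) :=
          measure_mono (ball_subset_ball' (by linarith [hzy i hi, dist_comm y (z i)]))
      _ ≤ Cμ ^ κ * μ (ball (z i) (ρ / 2)) := hd.measure_ball_two_pow_mul_le _ (by positivity) κ
  have hdisj : (t : Set ι).PairwiseDisjoint fun i => ball (z i) (ρ / 2) :=
    fun i hi j hj hij => ball_disjoint_ball (by linarith [hsep hi hj hij])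
  have hunion : (⋃ i ∈ t, ball (z i) (ρ / 2)) ⊆ ball y (R + ρ) :=
    iUnion₂_subset fun i hi => ball_subset_ball' (by linarith [hzy i hi])
  refine (ENNReal.mul_le_mul_iff_left hpos.ne' hfin.ne).1 ?_
  calc (t.card : ℝ≥0∞) * μ (ball y (R + ρ)) = ∑ _i ∈ t, μ (ball y (R + ρ)) := by simp
    _ ≤ ∑ i ∈ t, Cμ ^ κ * μ (ball (z i) (ρ / 2)) := Finset.sum_le_sum hlarge
    _ = Cμ ^ κ * μ (⋃ i ∈ t, ball (z i) (ρ / 2)) := by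
      rw [← Finset.mul_sum, measure_biUnion_finset hdisj fun _ _ => measurableSet_ball]
    _ ≤ Cμ ^ κ * μ (ball y (R + ρ)) := by gcongr

theorem DoublingWith.div_two_add_one_le_of_separated (hballs : BallsPosFinite μ)
    (hd : DoublingWith μ Cμ) {y : X} {R ε : ℝ} {κ : ℕ} (hε : 0 < ε)
    (hκ : 4 * R + 2 * ε ≤ 2 ^ κ * ε) {n : ℕ} {q : ℕ → X} (hq : ∀ j, q j ∈ closedBall y R)
    (hsep : ∀ a b, a + 2 ≤ b → b ≤ n → ε < dist (q a) (q b)) :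
    ((n / 2 + 1 : ℕ) : ℝ≥0∞) ≤ Cμ ^ κ := by
  have hR : 0 ≤ R := dist_nonneg.trans (hq 0)
  -- the even-indexed points of the chain are pairwise `ε`-separated
  simpa using hd.card_le_of_separated hballs (t := Finset.range (n / 2 + 1))
    (z := fun i => q (2 * i)) hε hR hκ (fun i _ => hq _) fun i hi j hj hij => by
      simp only [Finset.coe_range, mem_Iio] at hi hj
      rcases hij.lt_or_gt with h | h
      · exact (hsep _ _ (by omega) (by omega)).le
      · exact dist_comm (q (2 * i)) _ ▸ (hsep _ _ (by omega) (by omega)).le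

theorem AnnularlyConnected.exists_short_chain {L : ℝ} (hann : AnnularlyConnected X L)
    (hballs : BallsPosFinite μ) (hd : DoublingWith μ Cμ) {x a b : X} {ρ ε : ℝ} {κ : ℕ}
    (hρ : 0 < ρ) (hε : 0 < ε) (hκ : 4 * (2 * ρ * L) + 2 * ε ≤ 2 ^ κ * ε)
    (ha : a ∈ closedBall x (2 * ρ) \ ball x ρ) (hb : b ∈ closedBall x (2 * ρ) \ ball x ρ) :
    ∃ (n : ℕ) (q : ℕ → X), q 0 = a ∧ q n = b ∧
      (∀ j, q j ∈ closedBall x (2 * ρ * L) \ ball x (ρ / L)) ∧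
      (∀ j < n, dist (q j) (q (j + 1)) ≤ ε) ∧ ((n / 2 + 1 : ℕ) : ℝ≥0∞) ≤ Cμ ^ κ := by
  obtain ⟨γ, s, t, hst, hγ, rfl, rfl, himg⟩ := hann x ρ hρ a ha b hb
  obtain ⟨n, q, hq0, hqn, hqγ, hstep, hsep⟩ :=
    (isPreconnected_Icc.image γ hγ).exists_separated_chain hε
      (mem_image_of_mem γ (left_mem_Icc.2 hst)) (mem_image_of_mem γ (right_mem_Icc.2 hst))
  have hq : ∀ j, q j ∈ closedBall x (2 * ρ * L) \ ball x (ρ / L) := fun j => himg (hqγ j)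
  exact ⟨n, q, hq0, hqn, hq, hstep,
    hd.div_two_add_one_le_of_separated hballs hε hκ (fun j => (hq j).1) hsep⟩

end Doubling

theorem Set.finite_and_ncard_le_of_forall_lt_add {S : Set ℕ} {n : ℕ}
    (h : ∀ i ∈ S, ∀ j ∈ S, j < i + n) : S.Finite ∧ S.ncard ≤ n := by
  rcases S.eq_empty_or_nonempty with rfl | hS
  · simp
  have hsub : S ⊆ ↑(Finset.Ico (sInf S) (sInf S + n)) := fun j hj => by
    simpa using ⟨Nat.sInf_le hj, h _ (Nat.sInf_mem hS) j hj⟩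
  refine ⟨(Finset.finite_toSet _).subset hsub, ?_⟩
  simpa using Set.ncard_le_ncard hsub

theorem Nat.lt_add_mul_of_div_lt_div_add {i j B K : ℕ} (hB : 0 < B) (h : j / B < i / B + K) :
    j < i + K * B :=
  calc j < j / B * B + B := Nat.lt_div_mul_add hB
    _ ≤ (i / B + K) * B := by rw [← Nat.succ_mul]; exact Nat.mul_le_mul_right B h
    _ ≤ i + K * B := by rw [add_mul]; exact Nat.add_le_add_right (Nat.div_mul_le_self i B) _

theorem lt_add_of_div_two_pow_le {r C : ℝ} {k k' K : ℕ} (hr : 0 < r) (hK : C < 2 ^ K)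
    (h : r / 2 ^ k ≤ C * (r / 2 ^ k')) : k' < k + K := by
  have h' : (2 : ℝ) ^ k' ≤ C * 2 ^ k := by
    refine le_of_mul_le_mul_left ?_ hr
    calc r * 2 ^ k' = r / 2 ^ k * 2 ^ k * 2 ^ k' := by field_simp
      _ ≤ C * (r / 2 ^ k') * 2 ^ k * 2 ^ k' := by gcongr
      _ = r * (C * 2 ^ k) := by field_simp
  refine (pow_lt_pow_iff_right₀ (one_lt_two (α := ℝ))).1 (h'.trans_lt ?_)
  rw [pow_add, mul_comm]
  gcongr

theorem inv_two_pow_div_add_one_le_rpow {B : ℕ} (hB : 0 < B) (i : ℕ) :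
    ((2 : ℝ) ^ (i / B + 1))⁻¹ ≤ (2 : ℝ) ^ (-(1 / (B : ℝ) * i)) := by
  have hi : (i : ℝ) < (i / B + 1 : ℕ) * B := by
    exact_mod_cast (Nat.lt_div_mul_add hB).trans_eq (Nat.succ_mul _ _).symm
  rw [← Real.rpow_natCast, ← Real.rpow_neg zero_le_two]
  refine Real.rpow_le_rpow_of_exponent_le one_le_two (neg_le_neg ?_)
  rw [one_div_mul_eq_div, div_le_iff₀ (by positivity)]
  exact hi.le

section BallChain

variable {X : Type*} [MetricSpace X]

/-- The blocks `Q k 0, …, Q k (N k)` laid end to end, each padded to length `B` by repeating its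
last point. -/
def blockConcat (B : ℕ) (N : ℕ → ℕ) (Q : ℕ → ℕ → X) (i : ℕ) : X :=
  Q (i / B) (min (i % B) (N (i / B)))

theorem blockConcat_succ {B : ℕ} {N : ℕ → ℕ} {Q : ℕ → ℕ → X} {ε : ℕ → ℝ} (hε : ∀ k, 0 ≤ ε k)
    (hN : ∀ k, N k < B) (hjoin : ∀ k, Q k (N k) = Q (k + 1) 0)
    (hstep : ∀ k, ∀ j < N k, dist (Q k j) (Q k (j + 1)) ≤ ε k) (i : ℕ) :
    ((i + 1) / B = i / B ∧
        dist (blockConcat B N Q i) (blockConcat B N Q (i + 1)) ≤ ε (i / B)) ∨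
      ((i + 1) / B = i / B + 1 ∧ blockConcat B N Q (i + 1) = blockConcat B N Q i) := by
  have hB : 0 < B := (Nat.zero_le _).trans_lt (hN 0)
  have hi := Nat.mod_add_div i B
  unfold blockConcat
  rcases lt_or_ge (i % B + 1) B with hlt | hge
  · obtain ⟨hdiv, hmod⟩ : (i + 1) / B = i / B ∧ (i + 1) % B = i % B + 1 :=
      (Nat.div_mod_unique hB).2 ⟨by linarith, hlt⟩
    refine .inl ⟨hdiv, ?_⟩
    rw [hdiv, hmod]
    rcases lt_or_ge (i % B) (N (i / B)) with hj | hj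
    · rw [min_eq_left hj.le, min_eq_left hj]
      exact hstep _ _ hj
    · rw [min_eq_right hj, min_eq_right (hj.trans (Nat.le_succ _)), dist_self]
      exact hε _
  · have hlast : i % B + 1 = B := le_antisymm (Nat.mod_lt i hB) hge
    obtain ⟨hdiv, hmod⟩ : (i + 1) / B = i / B + 1 ∧ (i + 1) % B = 0 :=
      (Nat.div_mod_unique hB).2 ⟨by rw [mul_add, mul_one]; linarith, hB⟩
    refine .inr ⟨hdiv, ?_⟩
    have hN' : N (i / B) ≤ i % B := by have := hN (i / B); omega
    rw [hdiv, hmod, min_eq_left (Nat.zero_le _), min_eq_right hN', hjoin]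

variable {x : X} {r lam L M : ℝ}

theorem infDist_ball_comparable_diam_of_mem_annulus [PreconnectedSpace X] {c : X} {ρ : ℝ}
    (hρ : 0 < ρ) (hlam : 1 ≤ lam) (hL : 1 ≤ L) (hM : 16 * lam * L ^ 2 ≤ M)
    (hc : c ∈ closedBall x (2 * ρ * L) \ ball x (ρ / L)) :
    M⁻¹ * diam (ball c (ρ / (8 * lam * L))) ≤ infDist x (ball c (ρ / (8 * lam * L))) ∧
      infDist x (ball c (ρ / (8 * lam * L))) ≤ M * diam (ball c (ρ / (8 * lam * L))) := by
  have hs : 0 < ρ / (8 * lam * L) := by positivity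
  have hlow : 8 * lam * (ρ / (8 * lam * L)) ≤ dist x c := by
    rw [show 8 * lam * (ρ / (8 * lam * L)) = ρ / L by field_simp, dist_comm]
    simpa using hc.2
  have hup : dist x c ≤ 16 * lam * L ^ 2 * (ρ / (8 * lam * L)) := by
    rw [show 16 * lam * L ^ 2 * (ρ / (8 * lam * L)) = 2 * ρ * L by field_simp; ring, dist_comm]
    exact hc.1
  generalize ρ / (8 * lam * L) = s at *
  have h8 : 8 * s ≤ 8 * lam * s := by nlinarith
  have hM1 : 1 ≤ M := by nlinarith
  exact ⟨inv_mul_diam_ball_le_infDist hs hM1 (by linarith),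
    infDist_ball_le_mul_diam hs (by linarith) (by linarith) (hup.trans (by gcongr))⟩

theorem infDist_ball_le_mul_rpow {B i : ℕ} {c : X} {s : ℝ} (hr : 0 < r) (hB : 0 < B)
    (hs : 0 < s) (hM : 4 * L ≤ M) (hc : dist x c ≤ 2 * (r / 2 ^ (i / B)) * L) :
    infDist x (ball c s) ≤ M * r * 2 ^ (-(1 / (B : ℝ) * i)) := by
  have hL : 0 ≤ L := by
    nlinarith [dist_nonneg (x := x) (y := c), (by positivity : (0 : ℝ) < r / 2 ^ (i / B))]
  calc infDist x (ball c s) ≤ dist x c := infDist_le_dist_of_mem (mem_ball_self hs)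
    _ ≤ 4 * L * r * ((2 : ℝ) ^ (i / B + 1))⁻¹ := by
      convert hc using 1; rw [pow_succ]; field_simp; ring
    _ ≤ M * r * ((2 : ℝ) ^ (i / B + 1))⁻¹ := by gcongr
    _ ≤ M * r * 2 ^ (-(1 / (B : ℝ) * i)) := by
      have : 0 ≤ M := by linarith
      gcongr
      exact inv_two_pow_div_add_one_le_rpow hB i

theorem finite_and_ncard_le_of_mem_annulus {B K : ℕ} {c : ℕ → X} (hr : 0 < r) (hlam : 0 < lam)
    (hL : 1 ≤ L) (hB : 0 < B) (hK : 6 * L ^ 2 < 2 ^ K)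
    (hc : ∀ i, c i ∈ closedBall x (2 * (r / 2 ^ (i / B)) * L) \ ball x (r / 2 ^ (i / B) / L))
    (y : X) :
    {i | y ∈ ball (c i) (lam * (r / 2 ^ (i / B) / (8 * lam * L)))}.Finite ∧
      {i | y ∈ ball (c i) (lam * (r / 2 ^ (i / B) / (8 * lam * L)))}.ncard ≤ K * B := by
  have hwin : ∀ i, y ∈ ball (c i) (lam * (r / 2 ^ (i / B) / (8 * lam * L))) →
      r / 2 ^ (i / B) ≤ 2 * L * dist x y ∧ dist x y ≤ 3 * L * (r / 2 ^ (i / B)) := by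
    intro i hi
    obtain ⟨hci, hci'⟩ := hc i
    obtain ⟨u, hu, hρ⟩ : ∃ u, 0 < u ∧ r / 2 ^ (i / B) = 8 * L * u :=
      ⟨r / 2 ^ (i / B) / (8 * L), by positivity, by field_simp⟩
    rw [hρ, show lam * (8 * L * u / (8 * lam * L)) = u by field_simp, mem_ball] at hi
    rw [hρ, mem_closedBall] at hci
    rw [hρ, show 8 * L * u / L = 8 * u by field_simp, mem_ball, not_lt] at hci'
    have := dist_triangle x y (c i)
    have := dist_triangle x (c i) y
    rw [dist_comm] at hci hci'
    rw [dist_comm y] at *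
    constructor <;> nlinarith
  refine Set.finite_and_ncard_le_of_forall_lt_add fun i hi j hj => ?_
  refine Nat.lt_add_mul_of_div_lt_div_add hB (lt_add_of_div_two_pow_le hr hK ?_)
  calc r / 2 ^ (i / B) ≤ 2 * L * dist x y := (hwin i hi).1
    _ ≤ 2 * L * (3 * L * (r / 2 ^ (j / B))) := by gcongr; exact (hwin j hj).2
    _ = 6 * L ^ 2 * (r / 2 ^ (j / B)) := by ring

theorem isBallChain_blockConcat [PreconnectedSpace X] {B K : ℕ} {N : ℕ → ℕ} {Q : ℕ → ℕ → X}
    (hr : 0 < r) (hlam : 1 ≤ lam) (hL : 1 ≤ L) (hK : 6 * L ^ 2 < 2 ^ K)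
    (hM : 16 * lam * L ^ 2 + K * B ≤ M) (hN : ∀ k, N k < B) (hstart : dist x (Q 0 0) = 2 * r)
    (hjoin : ∀ k, Q k (N k) = Q (k + 1) 0)
    (hQ : ∀ k j, Q k j ∈ closedBall x (2 * (r / 2 ^ k) * L) \ ball x (r / 2 ^ k / L))
    (hstep : ∀ k, ∀ j < N k, dist (Q k j) (Q k (j + 1)) ≤ r / 2 ^ k / (16 * lam * L)) :
    IsBallChain lam M (1 / B) x r (blockConcat B N Q)
      fun i => r / 2 ^ (i / B) / (8 * lam * L) := by
  have hB : 0 < B := (Nat.zero_le _).trans_lt (hN 0)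
  have hM16 : 16 * lam * L ^ 2 ≤ M := by
    have : (0 : ℝ) ≤ K * B := by positivity
    linarith
  have hKB : (K * B : ℝ) ≤ M := by
    have : 0 ≤ 16 * lam * L ^ 2 := by positivity
    linarith
  have hc : ∀ i, blockConcat B N Q i ∈
      closedBall x (2 * (r / 2 ^ (i / B)) * L) \ ball x (r / 2 ^ (i / B) / L) := fun i => hQ _ _
  refine ⟨fun i => by positivity, ?_,
    fun i => infDist_ball_comparable_diam_of_mem_annulus (by positivity) hlam hL hM16 (hc i),
    fun i => infDist_ball_le_mul_rpow hr hB (by positivity) (by nlinarith)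
      ((dist_comm x _).trans_le (hc i).1),
    fun i => ?_, fun y => ?_⟩
  · refine (ball_disjoint_ball ?_).subset_compl_right
    simp only [blockConcat, Nat.zero_div, Nat.zero_mod, Nat.zero_le, min_eq_left, pow_zero,
      div_one]
    have : r / (8 * lam * L) ≤ r := div_le_self hr.le (by nlinarith)
    linarith [dist_comm x (Q 0 0)]
  · have hε : ∀ k, 0 ≤ r / 2 ^ k / (16 * lam * L) := fun k => by positivity
    dsimp only
    rcases blockConcat_succ hε hN hjoin hstep i with ⟨hdiv, hdist⟩ | ⟨hdiv, heq⟩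
    · refine exists_ball_subset_inter_union_subset (by positivity) (by rw [hdiv])
        (by rw [hdiv]; linarith [(by positivity : 0 < r / 2 ^ (i / B) / (8 * lam * L))]) ?_
        (by nlinarith)
      rw [hdiv]
      convert hdist using 1
      ring
    · rw [hdiv, heq, pow_succ]
      refine exists_ball_subset_inter_union_subset (by positivity) ?_ ?_
        (by rw [dist_self]; positivity) (by nlinarith)
      · gcongr; exact le_mul_of_one_le_right (by positivity) one_le_two
      · apply le_of_eq; field_simp
  · have := finite_and_ncard_le_of_mem_annulus hr (zero_lt_one.trans_le hlam) hL hB hK hc y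
    exact ⟨this.1, (Nat.cast_le.2 this.2).trans (by push_cast; exact hKB)⟩

end BallChain

theorem exists_dyadic_spine {X : Type*} [MetricSpace X] [PreconnectedSpace X] (x : X) {r : ℝ}
    (hr : 0 < r) (hdiam : ENNReal.ofReal r < ediam (univ : Set X) / 8) :
    ∃ p : ℕ → X, dist x (p 0) = 2 * r ∧ ∀ k,
      p k ∈ closedBall x (2 * (r / 2 ^ k)) \ ball x (r / 2 ^ k) ∧
        p (k + 1) ∈ closedBall x (2 * (r / 2 ^ k)) \ ball x (r / 2 ^ k) := by
  obtain ⟨z, hz⟩ := exists_le_dist_of_ofReal_lt_ediam x (t := 4 * r) (by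
    rw [show 2 * (4 * r) = 8 * r by ring, ENNReal.ofReal_mul (by norm_num), ENNReal.ofReal_ofNat,
      mul_comm]
    exact ENNReal.mul_lt_of_lt_div hdiam)
  have hle : ∀ k : ℕ, 2 * (r / 2 ^ k) ≤ dist x z := fun k => by
    have : r / 2 ^ k ≤ r := div_le_self hr.le (one_le_pow₀ one_le_two)
    linarith
  choose p hp using fun k => exists_dist_eq_of_le_dist (by positivity) (hle k)
  have hsucc : ∀ k : ℕ, 2 * (r / 2 ^ (k + 1)) = r / 2 ^ k := fun k => by
    rw [pow_succ]; field_simp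
  refine ⟨p, by simpa using hp 0, fun k => ⟨?_, ?_⟩⟩
  · rw [Set.mem_sdiff, mem_closedBall, mem_ball, dist_comm, hp, not_lt]
    exact ⟨le_rfl, by linarith [(by positivity : 0 < r / 2 ^ k)]⟩
  · rw [Set.mem_sdiff, mem_closedBall, mem_ball, dist_comm, hp, hsucc, not_lt]
    exact ⟨by linarith [(by positivity : 0 < r / 2 ^ k)], le_rfl⟩

/-- If `(X,d,μ)` is a doubling metric measure space and `(X,d)` is connected and
`L`-annularly connected, then `(X,d)` satisfies the chain condition. -/
theorem chainCondition_of_annularlyConnected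
    {X : Type*} [MetricSpace X] [MeasurableSpace X] [BorelSpace X]
    (μ : Measure X) (hballs : BallsPosFinite μ) (hdoub : Doubling μ)
    (hconn : ConnectedSpace X)
    (L : ℝ) (hL : 1 ≤ L) (hann : AnnularlyConnected X L) :
    ChainCondition X := by
  obtain ⟨Cμ, -, hCμ, hd⟩ := hdoub
  intro lam hlam
  -- `κ` lets the packing bound act on `ρ / (16 lam L)`-separated points of `closedBall x (2ρL)`,
  -- so blocks have fewer than `2P` steps; a point lies in enlarged balls of at most `K` scales.
  obtain ⟨κ, hκ⟩ : ∃ κ : ℕ, 128 * lam * L ^ 2 + 2 < 2 ^ κ :=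
    pow_unbounded_of_one_lt _ one_lt_two
  obtain ⟨P, hP⟩ : ∃ P : ℕ, Cμ ^ κ < P := ENNReal.exists_nat_gt (pow_ne_top hCμ.ne)
  obtain ⟨K, hK⟩ : ∃ K : ℕ, 6 * L ^ 2 < 2 ^ K := pow_unbounded_of_one_lt _ one_lt_two
  have hP0 : 0 < P := Nat.pos_of_ne_zero (by rintro rfl; simp at hP)
  have hM : 1 ≤ 16 * lam * L ^ 2 + K * (2 * P : ℕ) := by
    have : (0 : ℝ) ≤ K * (2 * P : ℕ) := by positivity
    nlinarith
  have hscale : ∀ ρ : ℝ, 0 < ρ →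
      4 * (2 * ρ * L) + 2 * (ρ / (16 * lam * L)) ≤ 2 ^ κ * (ρ / (16 * lam * L)) := fun ρ hρ => by
    rw [show 4 * (2 * ρ * L) + 2 * (ρ / (16 * lam * L)) =
      (128 * lam * L ^ 2 + 2) * (ρ / (16 * lam * L)) by field_simp; ring]
    gcongr
  refine ⟨16 * lam * L ^ 2 + K * (2 * P : ℕ), 1 / (2 * P : ℕ), hM, by positivity, ?_,
    fun x r hr hdiam => ?_⟩
  · rw [div_le_one (by positivity)]
    exact_mod_cast (by omega : 1 ≤ 2 * P)
  obtain ⟨p, hp0, hp⟩ := exists_dyadic_spine x hr hdiam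
  choose N Q hQ0 hQN hQ hstep hlen using fun k => hann.exists_short_chain hballs hd
    (by positivity) (by positivity) (hscale _ (by positivity)) (hp k).1 (hp k).2
  have hN : ∀ k, N k < 2 * P := fun k => by
    have := Nat.cast_lt.1 ((hlen k).trans_lt hP)
    omega
  exact ⟨_, _, isBallChain_blockConcat hr hlam hL hK le_rfl hN (by rw [hQ0, hp0])
    (fun k => (hQN k).trans (hQ0 (k + 1)).symm) hQ hstep⟩
end
end

section
/- If (X,d) is a geodesic metric space, then (X,d) satisfies the chain condition. -/
open MeasureTheory Metric Set Filter Topology ENNReal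

noncomputable section

/-- `X` is a geodesic space: any two points `x, y` are joined by an isometric
embedding of the interval `[0, dist x y]` sending the endpoints to `x` and `y`. -/
def GeodesicSpace (X : Type*) [MetricSpace X] : Prop :=
  ∀ x y : X, ∃ γ : ℝ → X, γ 0 = x ∧ γ (dist x y) = y ∧
    ∀ s ∈ Set.Icc (0 : ℝ) (dist x y), ∀ t ∈ Set.Icc (0 : ℝ) (dist x y),
      dist (γ s) (γ t) = |s - t|

set_option maxHeartbeats 1000000 in
/-- If `(X,d)` is a geodesic space, then `(X,d)` satisfies the chain condition. -/
theorem chainCondition_of_geodesic {X : Type*} [MetricSpace X]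
    (hgeo : GeodesicSpace X) : ChainCondition X := by
  intro lam hlam
  have hlam0 : (0:ℝ) < lam := by linarith
  set ε : ℝ := 1/(8*lam) with hεdef
  set θ : ℝ := 1 - ε with hθdef
  set α : ℝ := 1/(4*lam) with hαdef
  have hε0 : 0 < ε := by positivity
  have hε8 : ε ≤ 1/8 := by
    rw [hεdef]
    exact one_div_le_one_div_of_le (by norm_num) (by linarith)
  have hθ78 : 7/8 ≤ θ := by rw [hθdef]; linarith
  have hθ0 : 0 < θ := by linarith
  have hθ1 : θ < 1 := by rw [hθdef]; linarith
  have hα0 : 0 < α := by positivity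
  have hα14 : α ≤ 1/4 := by
    rw [hαdef]
    exact one_div_le_one_div_of_le (by norm_num) (by linarith)
  have hεα : ε = α/2 := by rw [hεdef, hαdef]; ring
  have hlamα : lam * α = 1/4 := by rw [hαdef]; field_simp
  refine ⟨100 * lam, Real.logb 2 θ⁻¹, by linarith, ?_, ?_, ?_⟩
  · exact Real.logb_pos (by norm_num) ((one_lt_inv₀ hθ0).mpr hθ1)
  · have h2 : θ⁻¹ ≤ 2 := by
      rw [inv_le_comm₀ hθ0 (by norm_num)]
      linarith
    calc Real.logb 2 θ⁻¹ ≤ Real.logb 2 2 :=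
          (Real.logb_le_logb (by norm_num) (by positivity) (by norm_num)).mpr h2
      _ = 1 := Real.logb_self_eq_one (by norm_num)
  intro x r hr hdiam
  -- find a far point z
  have h8 : ENNReal.ofReal r * 8 < EMetric.diam (Set.univ : Set X) := by
    exact (ENNReal.lt_div_iff_mul_lt (Or.inl (by norm_num)) (Or.inl (by norm_num))).mp hdiam
  obtain ⟨u, v, huv⟩ : ∃ u v : X, ENNReal.ofReal r * 8 < edist u v := by
    by_contra h
    push_neg at h
    exact absurd (EMetric.diam_le fun a _ b _ => h a b) (not_le.mpr h8)
  have huv' : 8 * r < dist u v := by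
    rw [edist_dist] at huv
    have : ENNReal.ofReal (8 * r) < ENNReal.ofReal (dist u v) := by
      rw [show ENNReal.ofReal (8*r) = ENNReal.ofReal r * 8 by
        rw [show (8:ℝ≥0∞) = ENNReal.ofReal 8 by simp, ← ENNReal.ofReal_mul hr.le]
        ring_nf]
      exact huv
    exact (ENNReal.ofReal_lt_ofReal_iff_of_nonneg (by positivity)).mp this
  obtain ⟨z, hz⟩ : ∃ z : X, 2*r ≤ dist x z := by
    rcases le_total (dist x u) (dist x v) with h | h
    · refine ⟨v, ?_⟩
      have := dist_triangle u x v
      rw [dist_comm u x] at this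
      linarith
    · refine ⟨u, ?_⟩
      have := dist_triangle u x v
      rw [dist_comm u x] at this
      linarith
  obtain ⟨γ, hγ0, hγL, hγiso⟩ := hgeo x z
  set L : ℝ := dist x z with hLdef
  -- the chain
  set t : ℕ → ℝ := fun i => 2 * r * θ^i with htdef
  have ht_pos : ∀ i, 0 < t i := fun i => by positivity
  have ht_le : ∀ i, t i ≤ 2*r := fun i => by
    have h1 : θ^i ≤ 1 := pow_le_one₀ hθ0.le hθ1.le
    have : 2*r*θ^i ≤ 2*r*1 := by nlinarith
    simpa [htdef] using this
  have htmem : ∀ a : ℝ, 0 ≤ a → a ≤ 2*r → a ∈ Set.Icc (0:ℝ) L :=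
    fun a h1 h2 => ⟨h1, by linarith⟩
  have hdγ : ∀ a ∈ Set.Icc (0:ℝ) L, ∀ b ∈ Set.Icc (0:ℝ) L,
      dist (γ a) (γ b) = |a - b| := hγiso
  have hdx : ∀ a ∈ Set.Icc (0:ℝ) L, dist x (γ a) = a := by
    intro a ha
    rw [← hγ0, hdγ 0 (htmem 0 le_rfl (by linarith)) a ha]
    rw [abs_sub_comm, sub_zero, abs_of_nonneg ha.1]
  set c : ℕ → X := fun i => γ (t i) with hcdef
  set s : ℕ → ℝ := fun i => α * t i with hsdef
  have hs_pos : ∀ i, 0 < s i := fun i => by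
    have := ht_pos i; positivity
  have hs_le : ∀ i, s i ≤ t i / 4 := fun i => by
    have h1 := ht_pos i
    simp only [hsdef]
    nlinarith
  have htIcc : ∀ i, t i ∈ Set.Icc (0:ℝ) L := fun i => htmem _ (ht_pos i).le (ht_le i)
  have hdxc : ∀ i, dist x (c i) = t i := fun i => hdx _ (htIcc i)
  -- infDist bounds
  have hinf_low : ∀ i, 3/4 * t i ≤ Metric.infDist x (ball (c i) (s i)) := by
    intro i
    by_contra h
    push_neg at h
    obtain ⟨p, hp, hpd⟩ := (Metric.infDist_lt_iff ⟨c i, mem_ball_self (hs_pos i)⟩).mp h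
    rw [mem_ball, dist_comm] at hp
    have h1 := dist_triangle x p (c i)
    have h2 := hdxc i
    have h3 := hs_le i
    rw [dist_comm p (c i)] at h1
    linarith
  have hinf_up : ∀ i, Metric.infDist x (ball (c i) (s i)) ≤ t i := by
    intro i
    rw [← hdxc i]
    exact Metric.infDist_le_dist_of_mem (mem_ball_self (hs_pos i))
  -- diam bounds
  have hdiam_up : ∀ i, Metric.diam (ball (c i) (s i)) ≤ 2 * s i :=
    fun i => Metric.diam_ball (hs_pos i).le
  have hdiam_low : ∀ i, s i / 2 ≤ Metric.diam (ball (c i) (s i)) := by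
    intro i
    have hmem2 : t i - s i / 2 ∈ Set.Icc (0:ℝ) L := by
      refine htmem _ ?_ ?_
      · have := hs_le i; have := ht_pos i; linarith
      · have := ht_le i; have := hs_pos i; linarith
    have hq : γ (t i - s i / 2) ∈ ball (c i) (s i) := by
      rw [mem_ball, hdγ _ hmem2 _ (htIcc i)]
      rw [abs_of_nonpos (by have := hs_pos i; linarith), neg_sub]
      have := hs_pos i; linarith
    have := Metric.dist_le_diam_of_mem isBounded_ball (mem_ball_self (hs_pos i)) hq
    rw [hdγ _ (htIcc i) _ hmem2] at this
    rw [abs_of_nonneg (by have := hs_pos i; linarith)] at this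
    linarith
  refine ⟨c, s, hs_pos, ?_, ?_, ?_, ?_, ?_⟩
  · -- (1)
    intro p hp
    rw [mem_ball, dist_comm] at hp
    simp only [mem_compl_iff, mem_ball, not_lt]
    have h1 := dist_triangle x p (c 0)
    have h2 : dist x (c 0) = 2*r := by
      rw [hdxc 0]; simp [htdef]
    have h3 : s 0 ≤ r / 2 := by
      have := hs_le 0
      have : t 0 = 2*r := by simp [htdef]
      simp only [hsdef, this]
      nlinarith
    rw [dist_comm p (c 0)] at h1
    rw [dist_comm]
    linarith
  · -- (2)
    intro i
    constructor
    · have hM : (100*lam)⁻¹ ≤ 1 := by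
        rw [inv_le_one_iff₀]; right; linarith
      have h1 : Metric.diam (ball (c i) (s i)) ≤ 3/4 * t i := by
        have := hdiam_up i
        have := hs_le i
        have := ht_pos i
        linarith
      have h2 : (100*lam)⁻¹ * Metric.diam (ball (c i) (s i)) ≤
          Metric.diam (ball (c i) (s i)) := by
        have hd0 : 0 ≤ Metric.diam (ball (c i) (s i)) := Metric.diam_nonneg
        nlinarith
      have := hinf_low i
      linarith
    · have h1 := hdiam_low i
      have h2 := hinf_up i
      have h3 : t i ≤ 100 * lam * (s i / 2) := by
        simp only [hsdef]
        have h4 : 100 * lam * (α * t i / 2) = 25/2 * t i := by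
          rw [hαdef]; field_simp; ring
        rw [h4]
        have := ht_pos i
        linarith
      calc Metric.infDist x (ball (c i) (s i)) ≤ t i := h2
        _ ≤ 100 * lam * (s i / 2) := h3
        _ ≤ 100 * lam * Metric.diam (ball (c i) (s i)) := mul_le_mul_of_nonneg_left (hdiam_low i) (by positivity)
  · -- (3)
    intro i
    have hpow : (2:ℝ) ^ (-(Real.logb 2 θ⁻¹ * (i:ℕ))) = θ^(i:ℕ) := by
      have h1 : -(Real.logb 2 θ⁻¹ * (i:ℕ)) = Real.logb 2 θ * (i:ℕ) := by
        rw [Real.logb_inv]; ring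
      rw [h1, Real.rpow_mul (by norm_num : (0:ℝ) ≤ 2),
        Real.rpow_logb (by norm_num) (by norm_num) hθ0, Real.rpow_natCast]
    rw [hpow]
    have h1 := hinf_up i
    have h2 : t i = 2*r*θ^i := rfl
    have h3 : 0 < θ^i := pow_pos hθ0 i
    nlinarith [mul_pos hr h3, mul_nonneg (mul_nonneg (sub_nonneg.mpr hlam) hr.le) h3.le]
  · -- (4)
    intro i
    have htsucc : t (i+1) = θ * t i := by
      simp only [htdef, pow_succ]; ring
    have hdcc : dist (c i) (c (i+1)) = ε * t i := by
      rw [hdγ _ (htIcc i) _ (htIcc (i+1)), htsucc]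
      rw [abs_of_nonneg (by nlinarith [ht_pos i])]
      rw [hθdef]; ring
    have hdcc' : dist (c (i+1)) (c i) = ε * t i := by rw [dist_comm]; exact hdcc
    have hssucc : s (i+1) = α * θ * t i := by
      simp only [hsdef, htsucc]; ring
    have hti := ht_pos i
    refine ⟨c (i+1), s (i+1) / 2, by have := hs_pos (i+1); linarith, ?_, ?_⟩
    · refine Set.subset_inter ?_ ?_
      · refine ball_subset_ball' ?_
        rw [hdcc', hssucc]
        have : s i = α * t i := rfl
        rw [this, hεα]
        nlinarith [mul_nonneg (mul_nonneg hα0.le hti.le) (by linarith : (0:ℝ) ≤ 1 - θ)]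
      · exact ball_subset_ball (by have := hs_pos (i+1); linarith)
    · refine Set.union_subset ?_ ?_
      · refine ball_subset_ball' ?_
        rw [hdcc, hssucc]
        have : s i = α * t i := rfl
        rw [this, hεα]
        nlinarith [mul_nonneg (mul_nonneg hα0.le hti.le) (mul_nonneg (sub_nonneg.mpr hlam) hθ0.le),
          mul_nonneg (mul_nonneg hα0.le hti.le) (by linarith : (0:ℝ) ≤ θ - 7/8),
          mul_nonneg hα0.le hti.le]
      · refine ball_subset_ball' ?_
        rw [dist_self, add_zero, hssucc]
        nlinarith [mul_nonneg (mul_nonneg (mul_nonneg hα0.le hθ0.le) hti.le)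
          (by linarith : (0:ℝ) ≤ lam - 1),
          mul_nonneg (mul_nonneg hα0.le hθ0.le) hti.le]
  · -- (5)
    intro y
    set S : Set ℕ := {i : ℕ | y ∈ ball (c i) (lam * s i)} with hSdef
    by_cases hS : S.Nonempty
    swap
    · rw [Set.not_nonempty_iff_eq_empty] at hS
      rw [hS]
      refine ⟨Set.finite_empty, ?_⟩
      simp
      linarith
    have hmemS : ∀ i ∈ S, 3/4 * t i < dist x y ∧ dist x y < 5/4 * t i := by
      intro i hi
      have hyi : dist y (c i) < t i / 4 := by
        have h1 : y ∈ ball (c i) (lam * s i) := hi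
        rw [mem_ball] at h1
        have h2 : lam * s i = t i / 4 := by
          have : s i = α * t i := rfl
          rw [this, ← mul_assoc, hlamα]; ring
        rw [h2] at h1
        exact h1
      have h1 := dist_triangle x y (c i)
      have h2 := dist_triangle x (c i) y
      rw [dist_comm (c i) y] at h2
      rw [hdxc i] at h1 h2
      rw [dist_comm y (c i)] at h1
      rw [dist_comm y (c i)] at *
      constructor <;> nlinarith [hyi, dist_comm y (c i)]
    have key : ∀ i ∈ S, ∀ j ∈ S, i ≤ j → (3:ℝ)/5 < θ^(j-i) := by
      intro i hi j hj hij
      obtain ⟨hi1, hi2⟩ := hmemS i hi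
      obtain ⟨hj1, hj2⟩ := hmemS j hj
      have htji : t j = θ^(j-i) * t i := by
        simp only [htdef]
        rw [show θ^(j-i) * (2*r*θ^i) = 2*r*(θ^(j-i)*θ^i) by ring, ← pow_add,
          Nat.sub_add_cancel hij]
      have hti := ht_pos i
      have htj := ht_pos j
      -- gives 3/4 t i < 5/4 t j, t j/t i > 3/5
      rw [htji] at hj1 hj2
      nlinarith
    set K : ℕ := Nat.ceil (6*lam) with hKdef
    have hK6 : 6*lam ≤ (K:ℝ) := Nat.le_ceil _
    have hθK : θ^K ≤ 3/5 := by
      have hb : 1 + (K:ℝ)*ε ≤ (1+ε)^K := one_add_mul_le_pow (by linarith) K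
      have hKε : 3/4 ≤ (K:ℝ)*ε := by
        have h1 : 6*lam*ε = 3/4 := by rw [hεdef]; field_simp; ring
        nlinarith
      have hmul : θ^K * (1+ε)^K ≤ 1 := by
        rw [← mul_pow]
        refine pow_le_one₀ (by nlinarith) (by rw [hθdef]; nlinarith)
      have h1 : θ^K * (1 + (K:ℝ)*ε) ≤ 1 :=
        le_trans (mul_le_mul_of_nonneg_left hb (pow_nonneg hθ0.le K)) hmul
      nlinarith [pow_nonneg hθ0.le K]
    have hi0 : sInf S ∈ S := Nat.sInf_mem hS
    have hsub : S ⊆ Set.Icc (sInf S) (sInf S + K) := by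
      intro j hj
      refine ⟨Nat.sInf_le hj, ?_⟩
      by_contra h
      push_neg at h
      have hle : sInf S ≤ j := Nat.sInf_le hj
      have h1 := key (sInf S) hi0 j hj hle
      have h2 : K ≤ j - sInf S := by omega
      have h3 : θ^(j - sInf S) ≤ θ^K := pow_le_pow_of_le_one hθ0.le hθ1.le h2
      linarith
    have hfin : S.Finite := (Set.finite_Icc _ _).subset hsub
    refine ⟨hfin, ?_⟩
    have hcard : S.ncard ≤ K + 1 := by
      have h1 : S.ncard ≤ (Set.Icc (sInf S) (sInf S + K)).ncard :=
        Set.ncard_le_ncard hsub (Set.finite_Icc _ _)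
      have h2 : (Set.Icc (sInf S) (sInf S + K)).ncard = K + 1 := by
        rw [← Finset.coe_Icc, Set.ncard_coe_finset, Nat.card_Icc]
        omega
      omega
    have hK1 : (K:ℝ) ≤ 6*lam + 1 := (Nat.ceil_lt_add_one (by positivity)).le
    calc (S.ncard : ℝ) ≤ (K:ℝ) + 1 := by exact_mod_cast hcard
      _ ≤ 100 * lam := by linarith
end
end

section
/- Suppose X is a metric space satisfying the chain condition, fix λ ≥ 1 with associated constants M ≥ 1, 0 < m ≤ 1, let x ∈ X, 0 < R_2 < diam(X)/8, and let B_0, B_1, B_2, … be a chain associated with x and R_2. Let 0 < R_1 < R_2. Then there exist indices i_{R_2} ≤ i_{R_1} such that the balls B_{i_{R_2}}, B_{i_{R_2}+1}, …, B_{i_{R_1}} satisfy: R_2/(M(1+M)^2) ≤ diam(B_{i_{R_2}}) ≤ M R_2; R_1/(M(1+M)^2) ≤ diam(B_{i_{R_1}}) ≤ M R_1; B_{i_{R_2}} ⊂ B(x,R_2); and B_{i_{R_1}} ⊂ B(x,R_1). -/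
open MeasureTheory Metric Set Filter Topology ENNReal

noncomputable section

/-- Given a chain `B_0, B_1, …` associated with `x, R₂` (with parameters
`lam ≥ 1`, `M ≥ 1`, `0 < m ≤ 1`) and `0 < R₁ < R₂`, there are indices
`i₂ ≤ i₁` such that `R₂/(M(1+M)²) ≤ diam B_{i₂} ≤ M R₂`,
`R₁/(M(1+M)²) ≤ diam B_{i₁} ≤ M R₁`, `B_{i₂} ⊆ B(x,R₂)` and `B_{i₁} ⊆ B(x,R₁)`. -/
theorem chain_comparison {X : Type*} [MetricSpace X]
    (lam M m : ℝ) (hlam : 1 ≤ lam) (hM : 1 ≤ M) (hm0 : 0 < m) (hm1 : m ≤ 1)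
    (x : X) (R₂ : ℝ) (hR₂ : 0 < R₂)
    (hR₂diam : ENNReal.ofReal R₂ < EMetric.diam (Set.univ : Set X) / 8)
    (c : ℕ → X) (s : ℕ → ℝ) (hchain : IsBallChain lam M m x R₂ c s)
    (R₁ : ℝ) (hR₁ : 0 < R₁) (hR₁₂ : R₁ < R₂) :
    ∃ i₂ i₁ : ℕ, i₂ ≤ i₁ ∧
      R₂ / (M * (1 + M) ^ 2) ≤ diam (ball (c i₂) (s i₂)) ∧
      diam (ball (c i₂) (s i₂)) ≤ M * R₂ ∧
      R₁ / (M * (1 + M) ^ 2) ≤ diam (ball (c i₁) (s i₁)) ∧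
      diam (ball (c i₁) (s i₁)) ≤ M * R₁ ∧
      ball (c i₂) (s i₂) ⊆ ball x R₂ ∧
      ball (c i₁) (s i₁) ⊆ ball x R₁ := by
  classical
  obtain ⟨hs, h1, h2, h3, h4, h5⟩ := hchain
  set B : ℕ → Set X := fun i => ball (c i) (s i) with hBdef
  set D : ℕ → ℝ := fun i => infDist x (B i) with hDdef
  set d : ℕ → ℝ := fun i => diam (B i) with hddef
  have hne : ∀ i, (B i).Nonempty := fun i => ⟨c i, mem_ball_self (hs i)⟩
  have hbd : ∀ i, Bornology.IsBounded (B i) := fun i => isBounded_ball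
  have hM0 : (0:ℝ) < M := lt_of_lt_of_le one_pos hM
  have h1M : (0:ℝ) < 1 + M := by linarith
  have h1M1 : (1:ℝ) < 1 + M := by linarith
  -- d i ≤ M * D i and D i ≤ M * d i
  have hdD : ∀ i, d i ≤ M * D i := by
    intro i
    have := (h2 i).1
    have h' : M⁻¹ * d i ≤ D i := this
    calc d i = M * (M⁻¹ * d i) := by field_simp
      _ ≤ M * D i := by
        apply mul_le_mul_of_nonneg_left h' (le_of_lt hM0)
  have hDd : ∀ i, D i ≤ M * d i := fun i => (h2 i).2
  have hDnn : ∀ i, 0 ≤ D i := fun i => infDist_nonneg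
  -- points of B i are within (1+M) * D i of x
  have hclose : ∀ i, ∀ z ∈ B i, dist x z ≤ (1 + M) * D i := by
    intro i z hz
    have h₁ : dist x z ≤ D i + d i := dist_le_infDist_add_diam (hbd i) hz
    have := hdD i
    nlinarith
  -- D i ≤ (1+M) * D (i+1)
  have hstep : ∀ i, D i ≤ (1 + M) * D (i + 1) := by
    intro i
    obtain ⟨y, t, ht, hsub, -⟩ := h4 i
    have hy : y ∈ B i ∩ B (i + 1) := hsub (mem_ball_self ht)
    have h₁ : D i ≤ dist x y := infDist_le_dist_of_mem hy.1
    have h₂ : dist x y ≤ D (i + 1) + d (i + 1) :=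
      dist_le_infDist_add_diam (hbd (i + 1)) hy.2
    have := hdD (i + 1)
    nlinarith
  -- D 0 ≥ R₂
  have hD0 : R₂ ≤ D 0 := by
    by_contra hcon
    push_neg at hcon
    obtain ⟨y, hy, hlt⟩ := (infDist_lt_iff (hne 0)).1 hcon
    exact h1 hy (by simpa [mem_ball, dist_comm] using hlt)
  -- D i gets arbitrarily small
  have hsmall : ∀ ε : ℝ, 0 < ε → ∃ i, D i < ε := by
    intro ε hε
    have hr1 : (2:ℝ) ^ (-m) < 1 :=
      Real.rpow_lt_one_of_one_lt_of_neg one_lt_two (by linarith)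
    have hr0 : (0:ℝ) ≤ (2:ℝ) ^ (-m) := Real.rpow_nonneg (by norm_num) _
    obtain ⟨n, hn⟩ := exists_pow_lt_of_lt_one (show (0:ℝ) < ε / (M * R₂) by positivity) hr1
    refine ⟨n, lt_of_le_of_lt (h3 n) ?_⟩
    have hEq : (2:ℝ) ^ (-(m * (n:ℝ))) = ((2:ℝ) ^ (-m)) ^ n := by
      rw [← Real.rpow_natCast ((2:ℝ) ^ (-m)) n, ← Real.rpow_mul (by norm_num)]
      ring_nf
    rw [hEq]
    calc M * R₂ * ((2:ℝ) ^ (-m)) ^ n < M * R₂ * (ε / (M * R₂)) := by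
          apply mul_lt_mul_of_pos_left hn (by positivity)
      _ = ε := by field_simp
  -- main construction for a radius R
  have main : ∀ (R : ℝ), 0 < R → R ≤ R₂ → ∀ (hex : ∃ i, D i < R / (1 + M)),
      R / (M * (1 + M) ^ 2) ≤ d (Nat.find hex) ∧ d (Nat.find hex) ≤ M * R ∧
        B (Nat.find hex) ⊆ ball x R := by
    intro R hR hRle hex
    set i := Nat.find hex with hi
    have hspec : D i < R / (1 + M) := Nat.find_spec hex
    have hipos : i ≠ 0 := by
      intro h0
      have : D 0 < R / (1 + M) := h0 ▸ hspec
      have hlt : R / (1 + M) < R := div_lt_self hR h1M1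
      linarith [hD0, hRle]
    obtain ⟨j, hj⟩ := Nat.exists_eq_succ_of_ne_zero hipos
    have hjlt : j < i := by omega
    have hjge : R / (1 + M) ≤ D j := le_of_not_gt (Nat.find_min hex hjlt)
    have hlow : R / (1 + M) ^ 2 ≤ D i := by
      have hst := hstep j
      have this : D j ≤ (1 + M) * D i := by rw [hj]; exact hst
      rw [div_le_iff₀ (by positivity)]
      rw [div_le_iff₀ (by positivity)] at hjge
      nlinarith [hDnn i]
    refine ⟨?_, ?_, ?_⟩
    · -- lower bound on diameter
      have := hDd i
      rw [div_le_iff₀ (by positivity)]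
      rw [div_le_iff₀ (by positivity)] at hlow
      nlinarith
    · -- upper bound on diameter
      have := hdD i
      have h' : D i < R / (1 + M) := hspec
      have : d i ≤ M * (R / (1 + M)) := by nlinarith
      calc d i ≤ M * (R / (1 + M)) := this
        _ ≤ M * R := by
          apply mul_le_mul_of_nonneg_left _ (le_of_lt hM0)
          exact le_of_lt (div_lt_self hR h1M1)
    · -- containment
      intro z hz
      have h₁ : dist x z ≤ (1 + M) * D i := hclose i z hz
      have h₂ : (1 + M) * D i < (1 + M) * (R / (1 + M)) :=
        mul_lt_mul_of_pos_left hspec h1M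
      have h₃ : (1 + M) * (R / (1 + M)) = R := by field_simp
      rw [mem_ball, dist_comm]
      linarith
  have hex₂ : ∃ i, D i < R₂ / (1 + M) := hsmall _ (by positivity)
  have hex₁ : ∃ i, D i < R₁ / (1 + M) := hsmall _ (by positivity)
  obtain ⟨hl₂, hu₂, hc₂⟩ := main R₂ hR₂ le_rfl hex₂
  obtain ⟨hl₁, hu₁, hc₁⟩ := main R₁ hR₁ (le_of_lt hR₁₂) hex₁
  refine ⟨Nat.find hex₂, Nat.find hex₁, ?_, hl₂, hu₂, hl₁, hu₁, hc₂, hc₁⟩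
  refine Nat.find_mono fun n hn => lt_of_lt_of_le hn ?_
  exact div_le_div_of_nonneg_right (le_of_lt hR₁₂) h1M.le
end
end

section
/- Suppose (X,d,μ) is a doubling metric measure space that satisfies the chain condition. Then μ is reverse doubling: there exist constants 0 < τ < 1/2 and 0 < c < 1 such that μ(B(x,τr)) ≤ c μ(B(x,r)) for every x ∈ X and every 0 < r < diam(X)/8. -/
open MeasureTheory Metric Set Filter Topology ENNReal

noncomputable section

/-- Iterated doubling: `μ(B(y, 2^n t)) ≤ Cμ^n μ(B(y,t))`. -/
lemma doubling_iter_aux {X : Type*} [MetricSpace X] [MeasurableSpace X]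
    {μ : Measure X} {Cμ : ℝ≥0∞} (h : DoublingWith μ Cμ) (y : X) {t : ℝ}
    (ht : 0 < t) (n : ℕ) : μ (ball y (2 ^ n * t)) ≤ Cμ ^ n * μ (ball y t) := by
  induction n with
  | zero => simp
  | succ n ih =>
      have he : (2:ℝ) ^ (n+1) * t = 2 * (2 ^ n * t) := by ring
      rw [he]
      calc μ (ball y (2 * (2 ^ n * t))) ≤ Cμ * μ (ball y (2 ^ n * t)) :=
            h y _ (by positivity)
        _ ≤ Cμ * (Cμ ^ n * μ (ball y t)) := mul_le_mul_right ih _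
        _ = Cμ ^ (n+1) * μ (ball y t) := by ring

/-- If a doubling metric measure space `(X,d,μ)` satisfies the chain condition,
then `μ` is reverse doubling: there exist `0 < τ < 1/2` and `0 < c < 1` with
`μ(B(x,τr)) ≤ c μ(B(x,r))` for every `x` and every `0 < r < diam(X)/8`. -/
theorem reverse_doubling_of_chainCondition
    {X : Type*} [MetricSpace X] [MeasurableSpace X] [BorelSpace X]
    (μ : Measure X) (hballs : BallsPosFinite μ) (hdoub : Doubling μ)
    (hchain : ChainCondition X) :
    ∃ (τ c : ℝ), 0 < τ ∧ τ < 1 / 2 ∧ 0 < c ∧ c < 1 ∧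
      ∀ (x : X) (r : ℝ), 0 < r →
        ENNReal.ofReal r < EMetric.diam (Set.univ : Set X) / 8 →
        μ (ball x (τ * r)) ≤ ENNReal.ofReal c * μ (ball x r) := by
  obtain ⟨Cμ, hC1, hCtop, hCd⟩ := hdoub
  obtain ⟨M, m, hM1, hm0, hm1, hch⟩ := hchain 1 le_rfl
  have hM0 : (0:ℝ) < M := lt_of_lt_of_le one_pos hM1
  set K : ℝ := M + M ^ 2 with hKdef
  have hK2 : (2:ℝ) ≤ K := by nlinarith
  have hK0 : (0:ℝ) < K := by linarith
  set τ : ℝ := 1 / (2 * K) with hτdef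
  have hτ0 : 0 < τ := by positivity
  have hτhalf : τ < 1 / 2 := by
    rw [hτdef, div_lt_div_iff₀ (by linarith) (by norm_num)]
    linarith
  obtain ⟨n, hn⟩ : ∃ n : ℕ, 4 * M / τ < (2:ℝ) ^ n :=
    pow_unbounded_of_one_lt _ one_lt_two
  set C : ℝ := Cμ.toReal with hCdef
  have hC1r : (1:ℝ) ≤ C := by
    have := ENNReal.toReal_mono hCtop.ne hC1
    simpa using this
  have hCn1 : (1:ℝ) ≤ C ^ n := one_le_pow₀ hC1r
  have hCn0 : (0:ℝ) < C ^ n := by positivity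
  refine ⟨τ, 1 - 1 / (2 * C ^ n), hτ0, hτhalf, ?_, ?_, ?_⟩
  · have h1 : 1 / (2 * C ^ n) ≤ 1 / 2 := by
      apply div_le_div_of_nonneg_left (by norm_num) (by norm_num) (by linarith)
    linarith
  · have h1 : 0 < 1 / (2 * C ^ n) := by positivity
    linarith
  intro x r hr hrd
  have hτr : 0 < τ * r := by positivity
  have hτrr : τ * r < r := by nlinarith
  obtain ⟨cc, s, hs, hB0c, h2, h3, -, -⟩ :=
    hch x (τ * r) hτr (lt_of_le_of_lt (ENNReal.ofReal_le_ofReal hτrr.le) hrd)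
  set B0 : Set X := ball (cc 0) (s 0) with hB0def
  have hs0 : 0 < s 0 := hs 0
  have hne : B0.Nonempty := ⟨cc 0, mem_ball_self hs0⟩
  -- lower bound for infDist
  have hinfge : τ * r ≤ infDist x B0 := by
    rw [infDist_eq_iInf]
    haveI : Nonempty B0 := hne.to_subtype
    refine le_ciInf fun y => ?_
    have hy : (y : X) ∉ ball x (τ * r) := hB0c y.2
    rw [mem_ball, dist_comm] at hy
    linarith [not_lt.mp hy]
  have h20 := h2 0
  have hinf_le : infDist x B0 ≤ M * (τ * r) := by
    have h30 := h3 0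
    simpa using h30
  have hMinv : M⁻¹ * diam B0 ≤ infDist x B0 := h20.1
  have hdiam_le : diam B0 ≤ M * (M * (τ * r)) := by
    have h1 : M⁻¹ * diam B0 ≤ M * (τ * r) := le_trans hMinv hinf_le
    have h2' : diam B0 = M * (M⁻¹ * diam B0) := by field_simp
    rw [h2']
    exact mul_le_mul_of_nonneg_left h1 hM0.le
  have hτr_le : τ * r ≤ M * diam B0 := le_trans hinfge h20.2
  have hdb : diam B0 ≤ 2 * s 0 := diam_ball hs0.le
  have hs0ge : τ * r / (2 * M) ≤ s 0 := by
    rw [div_le_iff₀ (by positivity)]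
    nlinarith [mul_le_mul_of_nonneg_left hdb hM0.le]
  have hKhalf : K * (τ * r) = r / 2 := by
    rw [hτdef]; field_simp
  have hdistc0 : dist x (cc 0) ≤ r / 2 := by
    have hd : dist x (cc 0) ≤ infDist x B0 + diam B0 :=
      dist_le_infDist_add_diam isBounded_ball (mem_ball_self hs0)
    have : infDist x B0 + diam B0 ≤ K * (τ * r) := by
      rw [hKdef]; nlinarith
    linarith [hKhalf ▸ this]
  have hB0sub : B0 ⊆ ball x r := by
    intro y hy
    have hd : dist x y ≤ infDist x B0 + diam B0 :=
      dist_le_infDist_add_diam isBounded_ball hy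
    have h1 : infDist x B0 + diam B0 ≤ K * (τ * r) := by
      rw [hKdef]; nlinarith
    rw [mem_ball, dist_comm]
    have := hKhalf ▸ h1
    linarith
  have hdisj : Disjoint (ball x (τ * r)) B0 :=
    Set.disjoint_left.mpr fun y h1 h2 => hB0c h2 h1
  have hsum : μ (ball x (τ * r)) + μ B0 ≤ μ (ball x r) := by
    rw [← measure_union hdisj measurableSet_ball]
    exact measure_mono (Set.union_subset (ball_subset_ball hτrr.le) hB0sub)
  -- lower bound on μ B0 via doubling chain
  have hsub2 : ball x r ⊆ ball (cc 0) (2 * r) := by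
    intro y hy
    rw [mem_ball] at hy ⊢
    have := dist_triangle y x (cc 0)
    linarith
  set t : ℝ := τ * r / (2 * M) with htdef
  have ht0 : 0 < t := by positivity
  have h2r : 2 * r ≤ 2 ^ n * t := by
    have heq : 2 * r = (4 * M / τ) * (τ * r / (2 * M)) := by
      field_simp; ring
    rw [htdef, heq]
    exact mul_le_mul_of_nonneg_right hn.le (by positivity)
  have hchain_meas : μ (ball x r) ≤ Cμ ^ n * μ B0 :=
    calc μ (ball x r) ≤ μ (ball (cc 0) (2 * r)) := measure_mono hsub2
      _ ≤ μ (ball (cc 0) (2 ^ n * t)) := measure_mono (ball_subset_ball h2r)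
      _ ≤ Cμ ^ n * μ (ball (cc 0) t) := doubling_iter_aux hCd _ ht0 n
      _ ≤ Cμ ^ n * μ B0 := mul_le_mul_right (measure_mono (ball_subset_ball hs0ge)) _
  -- pass to real numbers
  have hBfin : μ (ball x r) < ⊤ := (hballs x r hr).2
  have hAfin : μ (ball x (τ * r)) < ⊤ :=
    lt_of_le_of_lt (measure_mono (ball_subset_ball hτrr.le)) hBfin
  have hPfin : μ B0 < ⊤ := lt_of_le_of_lt (measure_mono hB0sub) hBfin
  set A : ℝ := (μ (ball x (τ * r))).toReal with hAdef
  set P : ℝ := (μ B0).toReal with hPdef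
  set B : ℝ := (μ (ball x r)).toReal with hBdef
  have hBnn : 0 ≤ B := ENNReal.toReal_nonneg
  have hAPB : A + P ≤ B := by
    rw [hAdef, hPdef, hBdef, ← ENNReal.toReal_add hAfin.ne hPfin.ne]
    exact ENNReal.toReal_mono hBfin.ne hsum
  have hBP : B ≤ C ^ n * P := by
    have hrhs : (Cμ ^ n * μ B0).toReal = C ^ n * P := by
      rw [ENNReal.toReal_mul, ENNReal.toReal_pow]
    rw [hBdef, ← hrhs]
    exact ENNReal.toReal_mono
      (ENNReal.mul_ne_top (ENNReal.pow_ne_top hCtop.ne) hPfin.ne) hchain_meas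
  have hP0 : (0:ℝ) ≤ P := ENNReal.toReal_nonneg
  clear_value A P B C
  clear_value K τ t B0
  have hc2 : (0:ℝ) < 2 * C ^ n := by positivity
  have key : A ≤ (1 - 1 / (2 * C ^ n)) * B := by
    have huB : 1 / (2 * C ^ n) * B ≤ P := by
      rw [div_mul_eq_mul_div, one_mul, div_le_iff₀ hc2]
      have h0 : (0:ℝ) ≤ P * C ^ n := mul_nonneg hP0 hCn0.le
      linarith only [hBP, h0]
    have hsplit : (1 - 1 / (2 * C ^ n)) * B = B - 1 / (2 * C ^ n) * B := by ring
    rw [hsplit]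
    linarith only [hAPB, huB]
  calc μ (ball x (τ * r)) = ENNReal.ofReal A := by
        rw [hAdef, ENNReal.ofReal_toReal hAfin.ne]
    _ ≤ ENNReal.ofReal ((1 - 1 / (2 * C ^ n)) * B) := ENNReal.ofReal_le_ofReal key
    _ = ENNReal.ofReal (1 - 1 / (2 * C ^ n)) * ENNReal.ofReal B := by
        rw [ENNReal.ofReal_mul]
        have h1 : 1 / (2 * C ^ n) ≤ 1 / 2 :=
          div_le_div_of_nonneg_left (by norm_num) (by norm_num) (by linarith only [hCn1])
        linarith only [h1]
    _ = ENNReal.ofReal (1 - 1 / (2 * C ^ n)) * μ (ball x r) := by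
        rw [hBdef, ENNReal.ofReal_toReal hBfin.ne]
end
end

section
/- Let (X,d,μ) be a metric measure space, Q > 1, ε > 0, c > 0, and let g ∈ L^Q(X,μ) be nonnegative and Borel measurable. Define E = { x ∈ X : there exist arbitrarily small 0 < r < 1/5 such that ∫_{B(x,r)} g^Q dμ ≥ c (log(1/r))^{−(Q−1+ε/2)} }. Then H^{h_1}(E) < ∞, where h_1(t) = (log(1/t))^{1−Q−ε/2}, and consequently H^h(E) = 0, where h(t) = (log(1/t))^{1−Q−ε}. -/
open MeasureTheory Metric Set Filter Topology ENNReal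

noncomputable section

/-!
Cover the bad set `E` at scale `δ` by balls `B(x, r)`, `r < δ`, that witness the lower bound on
`∫_B g^Q`, and pass to a disjoint Vitali subfamily whose 5-fold enlargements still cover `E`.
For each such ball `h₁(diam 5B) ≤ 2^(Q-1+ε/2) log(1/r)^(1-Q-ε/2) ≤ 2^(Q-1+ε/2) c⁻¹ ∫_B g^Q`, so
by disjointness the `h₁`-sum of the cover is bounded by a multiple of `‖g‖_Q^Q`, uniformly in `δ`.
Finally `h(t) / h₁(t) = log(1/t)^(-ε/2) → 0` as `t → 0`, so `H^h ≤ k H^{h₁}` for every `k > 0`.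
-/

theorem Real.log_one_div_rpow_le_of_le_ten_mul {p s d : ℝ} (hp : p < 0) (hs0 : 0 < s)
    (hs : s ≤ 1 / 100) (hd0 : 0 ≤ d) (hd : d ≤ 10 * s) :
    Real.log (1 / d) ^ p ≤ 2 ^ (-p) * Real.log (1 / s) ^ p := by
  have hlog10 : 2 * Real.log 10 ≤ Real.log (1 / s) := by
    rw [← Real.log_rpow (by norm_num)]
    refine Real.log_le_log (by positivity) ?_
    rw [le_div_iff₀ hs0]
    norm_num
    linarith
  have hhalf : Real.log (1 / s) / 2 ≤ Real.log (1 / (10 * s)) := by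
    rw [show 1 / (10 * s) = 1 / s / 10 by ring,
      Real.log_div (x := 1 / s) (by positivity) (by norm_num)]
    linarith
  have hpos : 0 < Real.log (1 / s) / 2 := by linarith [Real.log_pos (by norm_num : (1:ℝ) < 10)]
  calc Real.log (1 / d) ^ p ≤ Real.log (1 / (10 * s)) ^ p := by
        rcases hd0.eq_or_lt with rfl | hd0
        · rw [_root_.div_zero, Real.log_zero, Real.zero_rpow hp.ne]
          exact (Real.rpow_pos_of_pos (hpos.trans_le hhalf) p).le
        · exact Real.rpow_le_rpow_of_nonpos (by linarith) (Real.log_le_log (by positivity)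
            (one_div_le_one_div_of_le hd0 hd)) hp.le
    _ ≤ (Real.log (1 / s) / 2) ^ p := Real.rpow_le_rpow_of_nonpos hpos hhalf hp.le
    _ = 2 ^ (-p) * Real.log (1 / s) ^ p := by
        rw [Real.div_rpow (by linarith) (by norm_num), Real.rpow_neg (by norm_num)]
        ring

theorem Real.eventually_log_one_div_rpow_le_mul {a b k : ℝ} (ha : a ≠ 0) (hab : a < b)
    (hk : 0 < k) : ∀ᶠ s in 𝓝[≥] (0 : ℝ), Real.log (1 / s) ^ a ≤ k * Real.log (1 / s) ^ b := by
  rw [← Ioi_insert, nhdsWithin_insert, eventually_sup, eventually_pure]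
  -- at `s = 0` both sides are junk values: `log (1 / 0) = 0` and `0 ^ a = 0`
  refine ⟨by simp [Real.zero_rpow ha]; positivity, ?_⟩
  have hlog : Tendsto (fun s => Real.log (1 / s)) (𝓝[>] 0) atTop := by
    simpa only [one_div, Real.log_inv, Function.comp_def] using
      tendsto_neg_atBot_atTop.comp Real.tendsto_log_nhdsGT_zero
  have hsmall : ∀ᶠ L in atTop, 0 < L ∧ L ^ (a - b) ≤ k := by
    refine (eventually_gt_atTop 0).and ?_
    have := tendsto_rpow_neg_atTop (by linarith : 0 < b - a)
    simpa using (this.eventually (ge_mem_nhds hk))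
  filter_upwards [hlog.eventually hsmall] with s ⟨hL, hLk⟩
  calc Real.log (1 / s) ^ a = Real.log (1 / s) ^ (a - b) * Real.log (1 / s) ^ b := by
        rw [← Real.rpow_add hL, sub_add_cancel]
    _ ≤ k * Real.log (1 / s) ^ b := by gcongr

theorem hGauge_ediam_closedBall_le {X : Type*} [MetricSpace X] {p s : ℝ} (hp : p < 0)
    (hs0 : 0 < s) (hs : s ≤ 1 / 100) (x : X) :
    hGauge p (ediam (closedBall x (5 * s))) ≤ ENNReal.ofReal (2 ^ (-p) * Real.log (1 / s) ^ p) :=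
  ENNReal.ofReal_le_ofReal <| Real.log_one_div_rpow_le_of_le_ten_mul hp hs0 hs diam_nonneg <|
    (diam_closedBall (by positivity)).trans_eq (by ring)

theorem hGauge_le_smul_hGauge {a b k : ℝ} (ha : a ≠ 0) (hab : a < b) (hk : 0 < k) :
    hGauge a ≤ᶠ[𝓝[≥] 0] ENNReal.ofReal k • hGauge b := by
  have htoReal : Tendsto ENNReal.toReal (𝓝[≥] 0) (𝓝[≥] 0) :=
    tendsto_nhdsWithin_iff.2 ⟨(ENNReal.tendsto_toReal zero_ne_top).mono_left nhdsWithin_le_nhds,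
      Eventually.of_forall fun t => ENNReal.toReal_nonneg⟩
  filter_upwards [htoReal.eventually (Real.eventually_log_one_div_rpow_le_mul ha hab hk)] with t ht
  rw [Pi.smul_apply, smul_eq_mul, hGauge, hGauge, ← ENNReal.ofReal_mul hk.le]
  exact ENNReal.ofReal_le_ofReal ht

section

variable {X : Type*} [MetricSpace X] [MeasurableSpace X]

theorem hausdorffH_eq_zero_of_lt_top [BorelSpace X] {a b : ℝ} (ha : a ≠ 0) (hab : a < b)
    {E : Set X} (hE : hausdorffH b E < ⊤) : hausdorffH a E = 0 := by
  have hle : ∀ k : ℝ, 0 < k → hausdorffH a E ≤ ENNReal.ofReal k * hausdorffH b E := fun k hk =>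
    Measure.mkMetric_mono_smul ofReal_ne_top (by simpa using hk) (hGauge_le_smul_hGauge ha hab hk) E
  have hlim : Tendsto (fun k => ENNReal.ofReal k * hausdorffH b E) (𝓝[>] 0) (𝓝 0) := by
    simpa using ENNReal.Tendsto.mul_const
      ((ENNReal.continuous_ofReal.tendsto 0).mono_left nhdsWithin_le_nhds) (Or.inr hE.ne)
  exact nonpos_iff_eq_zero.1 <| ge_of_tendsto hlim (eventually_nhdsWithin_of_forall hle)

theorem exists_countable_closedBall_cover_tsum_le [OpensMeasurableSpace X] (ν : Measure X)
    [IsFiniteMeasure ν] (m : ℝ≥0∞ → ℝ≥0∞) (C : ℝ≥0∞) {E : Set X} {δ : ℝ}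
    (h : ∀ x ∈ E, ∃ r, 0 < r ∧ r < δ ∧ 0 < ν (closedBall x r) ∧
      m (ediam (closedBall x (5 * r))) ≤ C * ν (closedBall x r)) :
    ∃ (u : Set X) (r : X → ℝ), u.Countable ∧
      (∀ x ∈ u, ediam (closedBall x (5 * r x)) ≤ ENNReal.ofReal (10 * δ)) ∧
      E ⊆ ⋃ x : u, closedBall (x : X) (5 * r x) ∧
      ∑' x : u, m (ediam (closedBall (x : X) (5 * r x))) ≤ C * ν univ := by
  choose! r hr0 hrδ hνpos hm using h
  obtain ⟨u, huE, hdisj, hcov⟩ :=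
    Vitali.exists_disjoint_subfamily_covering_enlargement_closedBall E id r δ
      (fun x hx => (hrδ x hx).le) 5 (by norm_num)
  have hdisj' : Pairwise (Function.onFun Disjoint fun x : u => closedBall (x : X) (r x)) :=
    fun x y hxy => hdisj x.2 y.2 (Subtype.coe_injective.ne hxy)
  have hcount : u.Countable := by
    have := Measure.countable_meas_pos_of_disjoint_of_meas_iUnion_ne_top ν
      (fun _ => measurableSet_closedBall) hdisj' (measure_ne_top ν _)
    rw [eq_univ_of_forall (s := {x : u | 0 < ν (closedBall (x : X) (r x))})
      fun x => hνpos x (huE x.2)] at this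
    exact countable_coe_iff.1 (countable_univ_iff.1 this)
  refine ⟨u, r, hcount, fun x hx => ?_, fun x hx => ?_, ?_⟩
  · refine ediam_le_of_forall_dist_le fun y hy z hz => ?_
    have := hrδ x (huE hx)
    linarith [dist_triangle_right y z x, mem_closedBall.1 hy, mem_closedBall.1 hz]
  · obtain ⟨y, hyu, hsub⟩ := hcov x hx
    exact mem_iUnion.2 ⟨⟨y, hyu⟩, hsub (mem_closedBall_self (hr0 x hx).le)⟩
  · calc ∑' x : u, m (ediam (closedBall (x : X) (5 * r x)))
        ≤ ∑' x : u, C * ν (closedBall (x : X) (r x)) :=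
          ENNReal.tsum_le_tsum fun x => hm x (huE x.2)
      _ = C * ∑' x : u, ν (closedBall (x : X) (r x)) := ENNReal.tsum_mul_left
      _ ≤ C * ν univ := by
          gcongr
          exact (tsum_meas_le_meas_iUnion_of_disjoint ν (fun _ => measurableSet_closedBall)
            hdisj').trans (measure_mono (subset_univ _))

theorem mkMetric_le_mul_measure_univ [BorelSpace X] (ν : Measure X) [IsFiniteMeasure ν]
    (m : ℝ≥0∞ → ℝ≥0∞) (C : ℝ≥0∞) {E : Set X}
    (h : ∀ δ > (0 : ℝ), ∀ x ∈ E, ∃ r, 0 < r ∧ r < δ ∧ 0 < ν (closedBall x r) ∧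
      m (ediam (closedBall x (5 * r))) ≤ C * ν (closedBall x r)) :
    Measure.mkMetric m E ≤ C * ν univ := by
  choose u r hcount hdiam hcov hsum using fun n : ℕ =>
    exists_countable_closedBall_cover_tsum_le ν m C (h (1 / (n + 1)) Nat.one_div_pos_of_nat)
  have := fun n => (hcount n).to_subtype
  have hδ : Tendsto (fun n : ℕ => ENNReal.ofReal (10 * (1 / (n + 1)))) atTop (𝓝 0) := by
    simpa using (ENNReal.tendsto_ofReal
      (tendsto_one_div_add_atTop_nhds_zero_nat.const_mul (10 : ℝ)))
  calc Measure.mkMetric m E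
      ≤ liminf (fun n => ∑' x : u n, m (ediam (closedBall (x : X) (5 * r n x)))) atTop :=
        Measure.mkMetric_le_liminf_tsum E _ hδ (fun n (x : u n) => closedBall (x : X) (5 * r n x))
          (Eventually.of_forall fun n x => hdiam n x x.2) (Eventually.of_forall hcov) m
    _ ≤ C * ν univ := liminf_le_of_frequently_le' (Frequently.of_forall hsum)

theorem hGauge_ediam_closedBall_le_mul_measure {ν : Measure X} {P c s : ℝ} (hP : 0 < P)
    (hc : 0 < c) (hs0 : 0 < s) (hs : s ≤ 1 / 100) {x : X}
    (h : ENNReal.ofReal (c * Real.log (1 / s) ^ (-P)) ≤ ν (closedBall x s)) :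
    0 < ν (closedBall x s) ∧
      hGauge (-P) (ediam (closedBall x (5 * s))) ≤
        ENNReal.ofReal (2 ^ P / c) * ν (closedBall x s) := by
  have hlog : 0 < Real.log (1 / s) := Real.log_pos (by rw [lt_div_iff₀ hs0]; linarith)
  refine ⟨(ENNReal.ofReal_pos.2 (by positivity)).trans_le h, ?_⟩
  calc hGauge (-P) (ediam (closedBall x (5 * s)))
      ≤ ENNReal.ofReal (2 ^ (-(-P)) * Real.log (1 / s) ^ (-P)) :=
        hGauge_ediam_closedBall_le (neg_neg_of_pos hP) hs0 hs x
    _ = ENNReal.ofReal (2 ^ P / c) * ENNReal.ofReal (c * Real.log (1 / s) ^ (-P)) := by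
        rw [← ENNReal.ofReal_mul (by positivity), neg_neg]
        congr 1
        field_simp
    _ ≤ ENNReal.ofReal (2 ^ P / c) * ν (closedBall x s) := by gcongr

theorem hausdorffH_neg_lt_top_of_forall_exists_le_integral [BorelSpace X] (μ : Measure X)
    {f : X → ℝ} (hf : Integrable f μ) (hf0 : 0 ≤ᵐ[μ] f) {P c : ℝ} (hP : 0 < P) (hc : 0 < c)
    {E : Set X} (hE : ∀ x ∈ E, ∀ r₀ > (0 : ℝ), ∃ r : ℝ, 0 < r ∧ r < r₀ ∧
      c * Real.log (1 / r) ^ (-P) ≤ ∫ y in ball x r, f y ∂μ) :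
    hausdorffH (-P) E < ⊤ := by
  set ν := μ.withDensity fun y => ENNReal.ofReal (f y)
  have : IsFiniteMeasure ν := isFiniteMeasure_withDensity_ofReal hf.2
  have hν (x : X) (r : ℝ) : ENNReal.ofReal (∫ y in ball x r, f y ∂μ) ≤ ν (closedBall x r) := by
    rw [ofReal_integral_eq_lintegral_ofReal hf.restrict (ae_restrict_of_ae hf0),
      ← withDensity_apply _ measurableSet_ball]
    exact measure_mono ball_subset_closedBall
  refine (mkMetric_le_mul_measure_univ ν _ (ENNReal.ofReal (2 ^ P / c))
    fun δ hδ x hx => ?_).trans_lt (mul_lt_top ofReal_lt_top (measure_lt_top ν univ))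
  obtain ⟨r, hr0, hrδ, hr⟩ := hE x hx (min δ (1 / 100)) (by positivity)
  exact ⟨r, hr0, hrδ.trans_le (min_le_left _ _),
    hGauge_ediam_closedBall_le_mul_measure hP hc hr0 (hrδ.le.trans (min_le_right _ _))
      ((ENNReal.ofReal_le_ofReal hr).trans (hν x r))⟩

end

theorem bad_set_hausdorff_null_general
    {X : Type*} [MetricSpace X] [MeasurableSpace X] [BorelSpace X]
    (μ : Measure X)
    (Q ε c : ℝ) (hQ : 1 < Q) (hε : 0 < ε) (hc : 0 < c)
    (g : X → ℝ) (hg0 : ∀ x, 0 ≤ g x)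
    (hgLQ : MemLp g (ENNReal.ofReal Q) μ) :
    hausdorffH (1 - Q - ε / 2)
        {x : X | ∀ r₀ > (0 : ℝ), ∃ r : ℝ, 0 < r ∧ r < r₀ ∧ r < 1 / 5 ∧
          c * Real.log (1 / r) ^ (-(Q - 1 + ε / 2)) ≤ ∫ y in ball x r, g y ^ Q ∂μ} < ⊤ ∧
    hausdorffH (1 - Q - ε)
        {x : X | ∀ r₀ > (0 : ℝ), ∃ r : ℝ, 0 < r ∧ r < r₀ ∧ r < 1 / 5 ∧
          c * Real.log (1 / r) ^ (-(Q - 1 + ε / 2)) ≤ ∫ y in ball x r, g y ^ Q ∂μ} = 0 := by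
  have hf : Integrable (fun y => g y ^ Q) μ := by
    simpa [Real.norm_of_nonneg (hg0 _), (zero_lt_one.trans hQ).le] using
      hgLQ.integrable_norm_rpow (by simp; linarith) ofReal_ne_top
  refine ⟨?fin, hausdorffH_eq_zero_of_lt_top (by linarith) (by linarith) ?fin⟩
  rw [show 1 - Q - ε / 2 = -(Q - 1 + ε / 2) by ring]
  exact hausdorffH_neg_lt_top_of_forall_exists_le_integral μ hf
    (ae_of_all _ fun y => Real.rpow_nonneg (hg0 y) Q) (by linarith) hc
    fun x hx r₀ hr₀ => (hx r₀ hr₀).imp fun _ ⟨hr0, hrr₀, _, hr⟩ => ⟨hr0, hrr₀, hr⟩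

/-- Let `Q > 1`, `ε > 0`, `c > 0` and `g ∈ L^Q(X,μ)` nonnegative Borel measurable.
The set `E` of points `x` admitting arbitrarily small radii `0 < r < 1/5` with
`∫_{B(x,r)} g^Q dμ ≥ c log^{-(Q-1+ε/2)}(1/r)` satisfies `H^{h₁}(E) < ∞` for
`h₁(t) = log^{1-Q-ε/2}(1/t)`, and consequently `H^h(E) = 0` for
`h(t) = log^{1-Q-ε}(1/t)`. -/
theorem bad_set_hausdorff_null
    {X : Type*} [MetricSpace X] [MeasurableSpace X] [BorelSpace X]
    (μ : Measure X) (hballs : BallsPosFinite μ)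
    (Q ε c : ℝ) (hQ : 1 < Q) (hε : 0 < ε) (hc : 0 < c)
    (g : X → ℝ) (hg0 : ∀ x, 0 ≤ g x) (hgm : Measurable g)
    (hgLQ : MemLp g (ENNReal.ofReal Q) μ) :
    hausdorffH (1 - Q - ε / 2)
        {x : X | ∀ r₀ > (0 : ℝ), ∃ r : ℝ, 0 < r ∧ r < r₀ ∧ r < 1 / 5 ∧
          c * Real.log (1 / r) ^ (-(Q - 1 + ε / 2)) ≤ ∫ y in ball x r, g y ^ Q ∂μ} < ⊤ ∧
    hausdorffH (1 - Q - ε)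
        {x : X | ∀ r₀ > (0 : ℝ), ∃ r : ℝ, 0 < r ∧ r < r₀ ∧ r < 1 / 5 ∧
          c * Real.log (1 / r) ^ (-(Q - 1 + ε / 2)) ≤ ∫ y in ball x r, g y ^ Q ∂μ} = 0 :=
  bad_set_hausdorff_null_general μ Q ε c hQ hε hc g hg0 hgLQ
end
end
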